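/- arXiv:2009.07125 — 5 statements merged into one kernel-verified Lean document; each statement's English description precedes it below -/
import Mathlib

section
/- Let f : B → A be a unital *-homomorphism of finite-dimensional unital C*-algebras and let ω be a state on A. Then f(P_{ω∘f}^⊥) ≤ P_ω^⊥ and f(P_{ω∘f}) ≥ P_ω, where for a projection P one sets P^⊥ := 1 − P. -/
open scoped ComplexOrder

section CStarDefs
variable {A : Type*} [Ring A] [StarRing A] [Algebra ℂ A]

/-- A state: a positive unital linear functional (positivity encoded via the order on `ℂ`). -/
def IsState (ω : A →ₗ[ℂ] ℂ) : Prop :=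
  ω 1 = 1 ∧ ∀ a : A, 0 ≤ ω (star a * a)

/-- A projection in a `*`-algebra. -/
def IsProjection (p : A) : Prop := star p * p = p

/-- The C*-algebraic order: `a ≤ b` iff `b - a` is positive, i.e. of the form `star x * x`. -/
def CStarLe (a b : A) : Prop := ∃ x : A, b - a = star x * x

/-- `P` is the support of `ω`: the smallest projection with
`ω (P * a) = ω (a * P) = ω a` for all `a`. -/
def IsSupportOf (ω : A →ₗ[ℂ] ℂ) (P : A) : Prop :=
  IsProjection P ∧ (∀ a : A, ω (P * a) = ω a ∧ ω (a * P) = ω a) ∧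
    ∀ Q : A, IsProjection Q → (∀ a : A, ω (Q * a) = ω a ∧ ω (a * Q) = ω a) → CStarLe P Q

/-- Two states are mutually orthogonal iff their supports multiply to zero. -/
def MutuallyOrthogonal (ω ξ : A →ₗ[ℂ] ℂ) : Prop :=
  ∃ P Q : A, IsSupportOf ω P ∧ IsSupportOf ξ Q ∧ P * Q = 0

/-- A pure state: a state that cannot be written as a nontrivial convex combination of two
distinct states. -/
def IsPureState (ω : A →ₗ[ℂ] ℂ) : Prop :=
  IsState ω ∧ ∀ (l : ℝ) (ω₁ ω₂ : A →ₗ[ℂ] ℂ), 0 < l → l < 1 →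
    IsState ω₁ → IsState ω₂ → ω = (l : ℂ) • ω₁ + ((1 - l : ℝ) : ℂ) • ω₂ → ω₁ = ω₂

end CStarDefs

/-!
`Q := f P'` is a projection with `ω Q = (ω ∘ f) P' = ω 1`, so `ω (1 - Q) = 0`. Cauchy–Schwarz for
the positive sesquilinear form `(x, y) ↦ ω (star x * y)` then makes `ω` vanish on `(1 - Q) * a`
and `a * (1 - Q)`, i.e. `Q` has the defining property of a support projection, and minimality of
`P` gives `P ≤ Q`, equivalently `1 - Q ≤ 1 - P`.
-/

open ComplexConjugate

section Projections

variable {A : Type*} [Ring A] [StarRing A]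

lemma IsProjection.star_eq {p : A} (hp : IsProjection p) : star p = p := by
  calc star p = star (star p * p) := by rw [hp]
    _ = star p * p := by rw [star_mul, star_star]
    _ = p := hp

lemma IsProjection.mul_self {p : A} (hp : IsProjection p) : p * p = p := by
  nth_rewrite 1 [← hp.star_eq]
  exact hp

lemma IsProjection.one_sub {p : A} (hp : IsProjection p) : IsProjection (1 - p) := by
  rw [IsProjection, star_sub, star_one, hp.star_eq, sub_mul, mul_sub, mul_sub, one_mul, mul_one,
    hp.mul_self, sub_self, sub_zero, one_mul]

lemma IsProjection.map {B F : Type*} [Ring B] [StarRing B] [FunLike F A B] [MulHomClass F A B]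
    [StarHomClass F A B] (f : F) {p : A} (hp : IsProjection p) : IsProjection (f p) := by
  rw [IsProjection, ← map_star, ← map_mul, hp]

lemma CStarLe.one_sub {a b : A} (h : CStarLe a b) : CStarLe (1 - b) (1 - a) := by
  obtain ⟨x, hx⟩ := h
  exact ⟨x, by rw [← hx]; abel⟩

end Projections

section PositiveFunctionals

variable {A : Type*} [Ring A] [StarRing A] [Algebra ℂ A]

def IsPositiveFunctional (ω : A →ₗ[ℂ] ℂ) : Prop :=
  ∀ a : A, 0 ≤ ω (star a * a)

lemma IsState.isPositiveFunctional {ω : A →ₗ[ℂ] ℂ} (hω : IsState ω) : IsPositiveFunctional ω :=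
  hω.2

namespace IsPositiveFunctional

variable {ω : A →ₗ[ℂ] ℂ} (hω : IsPositiveFunctional ω)
include hω

lemma im_apply_star_mul_self (a : A) : (ω (star a * a)).im = 0 :=
  (Complex.nonneg_iff.mp (hω a)).2.symm

variable [StarModule ℂ A]

/-- Polarization: `ω (star z * z)` is real for `z = x + y` and for `z = I • x + y`. -/
lemma conj_apply_star_mul (x y : A) : conj (ω (star x * y)) = ω (star y * x) := by
  have hsum : ω (star (x + y) * (x + y)) =
      ω (star x * x) + ω (star x * y) + ω (star y * x) + ω (star y * y) := by
    simp only [star_add, add_mul, mul_add, map_add]; ring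
  have hrot : ω (star (Complex.I • x + y) * (Complex.I • x + y)) =
      ω (star x * x) - Complex.I * ω (star x * y) + Complex.I * ω (star y * x) +
        ω (star y * y) := by
    simp only [star_add, star_smul, add_mul, mul_add, smul_mul_assoc, mul_smul_comm, map_add,
      map_smul, Complex.star_def, Complex.conj_I, smul_eq_mul]
    ring_nf
    simp only [Complex.I_sq]
    ring
  have h₁ := hω.im_apply_star_mul_self (x + y)
  have h₂ := hω.im_apply_star_mul_self (Complex.I • x + y)
  rw [hsum] at h₁
  rw [hrot] at h₂
  have hx := hω.im_apply_star_mul_self x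
  have hy := hω.im_apply_star_mul_self y
  apply Complex.ext <;>
    simp only [Complex.add_im, Complex.sub_im, Complex.mul_im, Complex.I_re, Complex.I_im,
      Complex.conj_re, Complex.conj_im] at h₁ h₂ ⊢ <;> linarith

abbrev toCore : PreInnerProductSpace.Core ℂ A where
  inner x y := ω (star x * y)
  conj_inner_symm x y := hω.conj_apply_star_mul y x
  re_inner_nonneg x := (Complex.nonneg_iff.mp (hω x)).1
  add_left x y z := by simp only [star_add, add_mul, map_add]
  smul_left x y r := by simp only [star_smul, smul_mul_assoc, map_smul, smul_eq_mul,
    Complex.star_def]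

lemma apply_star_mul_eq_zero {x : A} (hx : ω (star x * x) = 0) (y : A) :
    ω (star x * y) = 0 := by
  have hcs := InnerProductSpace.Core.inner_mul_inner_self_le (c := hω.toCore) x y
  change ‖ω (star x * y)‖ * ‖ω (star y * x)‖ ≤ (ω (star x * x)).re * (ω (star y * y)).re at hcs
  rw [← hω.conj_apply_star_mul x y, Complex.norm_conj, hx, Complex.zero_re, zero_mul] at hcs
  exact norm_eq_zero.mp (mul_self_eq_zero.mp (le_antisymm hcs (mul_self_nonneg _)))

lemma apply_mul_eq_zero_of_isProjection {e : A} (he : IsProjection e) (h0 : ω e = 0) (a : A) :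
    ω (e * a) = 0 ∧ ω (a * e) = 0 := by
  have hee : ω (star e * e) = 0 := by rw [he, h0]
  constructor
  · simpa only [he.star_eq] using hω.apply_star_mul_eq_zero hee a
  · have h := hω.conj_apply_star_mul e (star a)
    rwa [star_star, hω.apply_star_mul_eq_zero hee, map_zero, eq_comm] at h

lemma apply_mul_eq_of_isProjection {q : A} (hq : IsProjection q) (h1 : ω q = ω 1) (a : A) :
    ω (q * a) = ω a ∧ ω (a * q) = ω a := by
  have h0 : ω (1 - q) = 0 := by rw [map_sub, h1, sub_self]
  obtain ⟨hl, hr⟩ := hω.apply_mul_eq_zero_of_isProjection hq.one_sub h0 a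
  rw [sub_mul, one_mul, map_sub, sub_eq_zero] at hl
  rw [mul_sub, mul_one, map_sub, sub_eq_zero] at hr
  exact ⟨hl.symm, hr.symm⟩

end IsPositiveFunctional

lemma IsSupportOf.cStarLe_of_apply_eq [StarModule ℂ A] {ω : A →ₗ[ℂ] ℂ}
    (hω : IsPositiveFunctional ω) {P q : A} (hP : IsSupportOf ω P) (hq : IsProjection q)
    (h1 : ω q = ω 1) : CStarLe P q :=
  hP.2.2 q hq (hω.apply_mul_eq_of_isProjection hq h1)

end PositiveFunctionals

theorem image_of_support_le_general
    {A B : Type*}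
    [NormedRing A] [StarRing A] [NormedAlgebra ℂ A]
    [StarModule ℂ A]
    [NormedRing B] [StarRing B] [NormedAlgebra ℂ B]
    (f : B →⋆ₐ[ℂ] A) (ω : A →ₗ[ℂ] ℂ) (hω : IsState ω)
    (P : A) (hP : IsSupportOf ω P)
    (P' : B) (hP' : IsSupportOf (ω.comp f.toAlgHom.toLinearMap) P') :
    CStarLe (f (1 - P')) (1 - P) ∧ CStarLe P (f P') := by
  have hfP' : ω (f P') = ω 1 := by
    simpa using (hP'.2.1 1).1
  have hle : CStarLe P (f P') :=
    hP.cStarLe_of_apply_eq hω.isPositiveFunctional (hP'.1.map f) hfP'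
  rw [map_sub, map_one]
  exact ⟨hle.one_sub, hle⟩

/-- For a unital `*`-homomorphism `f : B → A` of finite-dimensional unital
C*-algebras and a state `ω` on `A`, with support projections `P'` of `ω ∘ f` and `P` of `ω`,
one has `f (1 - P') ≤ 1 - P` and `P ≤ f P'`. -/
theorem image_of_support_le
    {A B : Type*}
    [NormedRing A] [StarRing A] [CStarRing A] [NormedAlgebra ℂ A]
    [StarModule ℂ A] [FiniteDimensional ℂ A]
    [NormedRing B] [StarRing B] [CStarRing B] [NormedAlgebra ℂ B]
    [StarModule ℂ B] [FiniteDimensional ℂ B]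
    (f : B →⋆ₐ[ℂ] A) (ω : A →ₗ[ℂ] ℂ) (hω : IsState ω)
    (P : A) (hP : IsSupportOf ω P)
    (P' : B) (hP' : IsSupportOf (ω.comp f.toAlgHom.toLinearMap) P') :
    CStarLe (f (1 - P')) (1 - P) ∧ CStarLe P (f P') :=
  image_of_support_le_general f ω hω P hP P' hP'
end

section
/- Let f : B → A be a unital *-homomorphism of finite-dimensional unital C*-algebras and let ω, ξ be states on A that are not mutually orthogonal (i.e., P_ω P_ξ ≠ 0). Then ω∘f and ξ∘f are not mutually orthogonal. -/
open scoped ComplexOrder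

/-! The projection `Q := f P'_ω` satisfies `ω Q = 1`. Cauchy–Schwarz for the positive functional
`ω` makes it vanish on `(1 - Q) A` and `A (1 - Q)`, so `Q` absorbs `ω` and minimality of the
support gives `P_ω ≤ Q`, i.e. `P_ω = P_ω Q`. Likewise `P_ξ = R P_ξ` for `R := f P'_ξ`, whence
`P_ω P_ξ = P_ω f (P'_ω P'_ξ) P_ξ`. -/

lemma isProjection_iff_isStarProjection {A : Type*} [Ring A] [StarRing A] [Algebra ℂ A] {p : A} :
    IsProjection p ↔ IsStarProjection p := by
  refine ⟨fun hp => ?_, fun hp => ?_⟩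
  · have hsa : star p = p := by
      calc star p = star (star p * p) := by rw [hp]
        _ = p := by rw [star_mul, star_star, hp]
    exact ⟨by rw [IsIdempotentElem]; nth_rw 1 [← hsa]; exact hp, hsa⟩
  · rw [IsProjection, hp.isSelfAdjoint.star_eq, hp.isIdempotentElem.eq]

lemma IsSupportOf.apply_eq_apply_one {A : Type*} [Ring A] [StarRing A] [Algebra ℂ A]
    {ψ : A →ₗ[ℂ] ℂ} {P : A} (hP : IsSupportOf ψ P) : ψ P = ψ 1 := by
  simpa using (hP.2.1 1).1

namespace PositiveLinearMap

variable {A : Type*} [NonUnitalCStarAlgebra A] [PartialOrder A] [StarOrderedRing A]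

noncomputable def ofStarMulSelfNonneg (ψ : A →ₗ[ℂ] ℂ) (hψ : ∀ a, 0 ≤ ψ (star a * a)) :
    A →ₚ[ℂ] ℂ :=
  mk₀ ψ fun a ha => by
    obtain ⟨x, rfl⟩ := CStarAlgebra.nonneg_iff_eq_star_mul_self.mp ha
    exact hψ x

/-- Cauchy–Schwarz for the GNS semi-inner product `⟪a, b⟫ = ψ (star a * b)`. -/
lemma apply_star_mul_eq_zero (ψ : A →ₚ[ℂ] ℂ) {a : A} (ha : ψ (star a * a) = 0) (b : A) :
    ψ (star a * b) = 0 := by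
  have hnorm : ‖ψ.toPreGNS a‖ = 0 := by
    have := ψ.preGNS_norm_sq (ψ.toPreGNS a)
    simp_all
  have := norm_inner_le_norm (𝕜 := ℂ) (ψ.toPreGNS a) (ψ.toPreGNS b)
  rw [hnorm, zero_mul] at this
  exact norm_le_zero_iff.mp this

end PositiveLinearMap

section CStarAlgebra

variable {A : Type*} [CStarAlgebra A] [PartialOrder A] [StarOrderedRing A]

lemma cStarLe_iff_le {a b : A} : CStarLe a b ↔ a ≤ b := by
  rw [← sub_nonneg, CStarAlgebra.nonneg_iff_eq_star_mul_self]
  rfl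

lemma IsState.apply_mul_eq_of_apply_eq_one {ψ : A →ₗ[ℂ] ℂ} (hψ : IsState ψ) {T : A}
    (hT : IsStarProjection T) (hψT : ψ T = 1) (a : A) : ψ (T * a) = ψ a ∧ ψ (a * T) = ψ a := by
  set φ := PositiveLinearMap.ofStarMulSelfNonneg ψ hψ.2
  have hS := hT.one_sub
  have hS0 : φ (star (1 - T) * (1 - T)) = 0 := by
    rw [hS.isSelfAdjoint.star_eq, hS.isIdempotentElem.eq]
    exact (map_sub ψ 1 T).trans (by rw [hψ.1, hψT, sub_self])
  have hleft : φ ((1 - T) * a) = 0 := by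
    simpa only [hS.isSelfAdjoint.star_eq] using φ.apply_star_mul_eq_zero hS0 a
  have hright : φ (a * (1 - T)) = 0 := by
    have h := φ.apply_star_mul_eq_zero hS0 (star a)
    rwa [← star_mul, map_star, star_eq_zero] at h
  rw [sub_mul, one_mul, map_sub, sub_eq_zero] at hleft
  rw [mul_sub, mul_one, map_sub, sub_eq_zero] at hright
  exact ⟨hleft.symm, hright.symm⟩

lemma IsSupportOf.le_of_apply_eq_one {ψ : A →ₗ[ℂ] ℂ} (hψ : IsState ψ) {P T : A}
    (hP : IsSupportOf ψ P) (hT : IsStarProjection T) (hψT : ψ T = 1) : P ≤ T :=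
  cStarLe_iff_le.mp <| hP.2.2 T (isProjection_iff_isStarProjection.mpr hT)
    (hψ.apply_mul_eq_of_apply_eq_one hT hψT)

end CStarAlgebra
theorem overlapping_states_stay_overlapping_general
    {A B : Type*}
    [NormedRing A] [StarRing A] [CStarRing A] [NormedAlgebra ℂ A]
    [StarModule ℂ A] [FiniteDimensional ℂ A]
    [NormedRing B] [StarRing B] [NormedAlgebra ℂ B]
    (f : B →⋆ₐ[ℂ] A) (ω ξ : A →ₗ[ℂ] ℂ) (hω : IsState ω) (hξ : IsState ξ)
    (Pω Pξ : A) (hPω : IsSupportOf ω Pω) (hPξ : IsSupportOf ξ Pξ)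
    (hover : Pω * Pξ ≠ 0)
    (Pω' Pξ' : B) (hPω' : IsSupportOf (ω.comp f.toAlgHom.toLinearMap) Pω')
    (hPξ' : IsSupportOf (ξ.comp f.toAlgHom.toLinearMap) Pξ') :
    Pω' * Pξ' ≠ 0 := by
  have : CompleteSpace A := FiniteDimensional.complete ℂ A
  let _ : CStarAlgebra A := {}
  let _ := CStarAlgebra.spectralOrder A
  have := CStarAlgebra.spectralOrderedRing A
  have hPω_proj := isProjection_iff_isStarProjection.mp hPω.1
  have hPξ_proj := isProjection_iff_isStarProjection.mp hPξ.1
  have hQ := (isProjection_iff_isStarProjection.mp hPω'.1).map f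
  have hR := (isProjection_iff_isStarProjection.mp hPξ'.1).map f
  have hωQ : ω (f Pω') = 1 := by simpa [hω.1] using hPω'.apply_eq_apply_one
  have hξR : ξ (f Pξ') = 1 := by simpa [hξ.1] using hPξ'.apply_eq_apply_one
  have hPωQ : Pω * f Pω' = Pω :=
    (hPω_proj.le_iff_mul_eq_left hQ).mp (hPω.le_of_apply_eq_one hω hQ hωQ)
  have hRPξ : f Pξ' * Pξ = Pξ :=
    (hPξ_proj.le_iff_mul_eq_right hR).mp (hPξ.le_of_apply_eq_one hξ hR hξR)
  intro h
  apply hover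
  calc Pω * Pξ = (Pω * f Pω') * (f Pξ' * Pξ) := by rw [hPωQ, hRPξ]
    _ = Pω * f (Pω' * Pξ') * Pξ := by simp only [map_mul, mul_assoc]
    _ = 0 := by rw [h, map_zero, mul_zero, zero_mul]

/-- Let `f : B → A` be a unital `*`-homomorphism of finite-dimensional
unital C*-algebras and let `ω, ξ` be states on `A` that are not mutually orthogonal
(their supports satisfy `P_ω * P_ξ ≠ 0`). Then `ω ∘ f` and `ξ ∘ f` are not mutually
orthogonal either. -/
theorem overlapping_states_stay_overlapping
    {A B : Type*}
    [NormedRing A] [StarRing A] [CStarRing A] [NormedAlgebra ℂ A]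
    [StarModule ℂ A] [FiniteDimensional ℂ A]
    [NormedRing B] [StarRing B] [CStarRing B] [NormedAlgebra ℂ B]
    [StarModule ℂ B] [FiniteDimensional ℂ B]
    (f : B →⋆ₐ[ℂ] A) (ω ξ : A →ₗ[ℂ] ℂ) (hω : IsState ω) (hξ : IsState ξ)
    (Pω Pξ : A) (hPω : IsSupportOf ω Pω) (hPξ : IsSupportOf ξ Pξ)
    (hover : Pω * Pξ ≠ 0)
    (Pω' Pξ' : B) (hPω' : IsSupportOf (ω.comp f.toAlgHom.toLinearMap) Pω')
    (hPξ' : IsSupportOf (ξ.comp f.toAlgHom.toLinearMap) Pξ') :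
    Pω' * Pξ' ≠ 0 :=
  overlapping_states_stay_overlapping_general f ω ξ hω hξ Pω Pξ hPω hPξ hover Pω' Pξ' hPω' hPξ'
end

section
/- Let X be a finite set, {ρ_x}_{x∈X} a family of density matrices in M_n(ℂ), and p a probability distribution on X. Then Σ_{x∈X} p_x S(ρ_x) ≤ S(Σ_{x∈X} p_x ρ_x) ≤ H(p) + Σ_{x∈X} p_x S(ρ_x). Furthermore, the second inequality is an equality if and only if ρ_x ρ_{x'} = 0 for all distinct x, x' ∈ X with p_x ≠ 0 and p_{x'} ≠ 0. -/
open scoped ComplexOrder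

/-- The von Neumann entropy of a (hermitian) matrix: `∑ -λ log λ` over its eigenvalues,
with the convention `0 log 0 = 0`. -/
noncomputable def vnEntropy {ι : Type*} [Fintype ι] [DecidableEq ι] (ρ : Matrix ι ι ℂ) : ℝ :=
  if h : ρ.IsHermitian then ∑ i, Real.negMulLog (h.eigenvalues i) else 0

/-- Shannon entropy of a finitely supported distribution (`0 log 0 = 0`). -/
noncomputable def shannonEntropy {X : Type*} [Fintype X] (p : X → ℝ) : ℝ :=
  ∑ x, Real.negMulLog (p x)

def IsProbDist {X : Type*} [Fintype X] (p : X → ℝ) : Prop :=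
  (∀ x, 0 ≤ p x) ∧ ∑ x, p x = 1

def IsDensityMatrix {ι : Type*} [Fintype ι] (ρ : Matrix ι ι ℂ) : Prop :=
  ρ.PosSemidef ∧ ρ.trace = 1

/-!
Write each weighted state as `pₓ ρₓ = Gₓ Gₓᴴ` with `Gₓᴴ Gₓ = pₓ · diag(λₓ)`, where `λₓ` is the
spectrum of `ρₓ`, and place the `Gₓ` side by side in one matrix `M`. Then `∑ pₓ ρₓ = M Mᴴ`, which
has the same nonzero spectrum as the Gram matrix `Mᴴ M`, and the diagonal of `Mᴴ M` is the joint
distribution `pₓ λₓⱼ`, whose entropy is `H(p) + ∑ pₓ S(ρₓ)`. For a positive semidefinite `σ`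
diagonalised by a unitary `W`, the diagonal of `σ` is the image of its spectrum under the doubly
stochastic matrix `|Wᵢⱼ|²`, so strict concavity of `-t log t` gives `S(σ) ≤ H(diag σ)`, with
equality iff `σ` is diagonal. For `σ = Mᴴ M` that means `Gₓᴴ Gₓ' = 0` for `x ≠ x'`, i.e.
`ρₓ ρₓ' = 0` whenever both weights are nonzero. The lower bound is the same inequality for each
`ρₓ`, read in an eigenbasis of `∑ pₓ ρₓ`, followed by Jensen's inequality.
-/

open Matrix Polynomial Real

section Entropy

variable {ι κ : Type*} [Fintype ι] [DecidableEq ι] [Fintype κ] [DecidableEq κ]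

lemma vnEntropy_of_isHermitian {A : Matrix ι ι ℂ} (hA : A.IsHermitian) :
    vnEntropy A = ∑ i, negMulLog (hA.eigenvalues i) :=
  dif_pos hA

lemma vnEntropy_eq_sum_roots_charpoly {A : Matrix ι ι ℂ} (hA : A.IsHermitian) :
    vnEntropy A = (A.charpoly.roots.map fun z : ℂ => negMulLog z.re).sum := by
  rw [vnEntropy_of_isHermitian hA, hA.roots_charpoly_eq_eigenvalues, Multiset.map_map]
  rfl

lemma vnEntropy_eq_of_charpoly_eq {A B : Matrix ι ι ℂ} (hA : A.IsHermitian) (hB : B.IsHermitian)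
    (h : A.charpoly = B.charpoly) : vnEntropy A = vnEntropy B := by
  rw [vnEntropy_eq_sum_roots_charpoly hA, vnEntropy_eq_sum_roots_charpoly hB, h]

lemma vnEntropy_diagonal (d : ι → ℝ) :
    vnEntropy (diagonal fun i => (d i : ℂ)) = ∑ i, negMulLog (d i) := by
  rw [vnEntropy_eq_sum_roots_charpoly (isHermitian_diagonal_of_self_adjoint _ (by ext; simp)),
    charpoly_diagonal, roots_prod _ _ (by simp [Finset.prod_ne_zero_iff, X_sub_C_ne_zero])]
  simp

lemma vnEntropy_conjTranspose_mul_mul {A U : Matrix ι ι ℂ} (hA : A.IsHermitian)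
    (hU : U ∈ unitaryGroup ι ℂ) : vnEntropy (Uᴴ * A * U) = vnEntropy A := by
  refine vnEntropy_eq_of_charpoly_eq (isHermitian_conjTranspose_mul_mul U hA) hA ?_
  rw [charpoly_mul_comm, ← Matrix.mul_assoc, ← star_eq_conjTranspose, mem_unitaryGroup_iff.mp hU,
    Matrix.one_mul]

lemma sum_map_negMulLog_roots_X_pow_mul {P : ℂ[X]} (hP : P ≠ 0) (k : ℕ) :
    ((X ^ k * P).roots.map fun z : ℂ => negMulLog z.re).sum
      = (P.roots.map fun z : ℂ => negMulLog z.re).sum := by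
  rw [roots_mul (mul_ne_zero (pow_ne_zero _ X_ne_zero) hP), roots_X_pow]
  simp [Multiset.map_nsmul, Multiset.sum_nsmul]

lemma vnEntropy_mul_conjTranspose_eq_conjTranspose_mul (M : Matrix ι κ ℂ) :
    vnEntropy (M * Mᴴ) = vnEntropy (Mᴴ * M) := by
  rw [vnEntropy_eq_sum_roots_charpoly (isHermitian_mul_conjTranspose_self M),
    vnEntropy_eq_sum_roots_charpoly (isHermitian_conjTranspose_mul_self M),
    ← sum_map_negMulLog_roots_X_pow_mul (charpoly_monic _).ne_zero (Fintype.card κ),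
    ← sum_map_negMulLog_roots_X_pow_mul (charpoly_monic _).ne_zero (Fintype.card ι),
    charpoly_mul_comm']

end Entropy

section DoublyStochastic

variable {m : Type*} [Fintype m] [DecidableEq m] {B : Matrix m m ℝ} {t : m → ℝ}

lemma sum_mul_negMulLog_le_negMulLog_mulVec (hB : B ∈ doublyStochastic ℝ m)
    (ht : ∀ j, 0 ≤ t j) (i : m) :
    ∑ j, B i j * negMulLog (t j) ≤ negMulLog ((B *ᵥ t) i) := by
  simpa [mulVec, dotProduct] using concaveOn_negMulLog.le_map_sum
    (fun j _ => nonneg_of_mem_doublyStochastic hB) (sum_row_of_mem_doublyStochastic hB i)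
    (fun j _ => ht j)

lemma negMulLog_mulVec_eq_iff (hB : B ∈ doublyStochastic ℝ m) (ht : ∀ j, 0 ≤ t j) (i : m) :
    negMulLog ((B *ᵥ t) i) = ∑ j, B i j * negMulLog (t j) ↔
      ∀ j, B i j ≠ 0 → t j = (B *ᵥ t) i := by
  simpa [mulVec, dotProduct] using strictConcaveOn_negMulLog.map_sum_eq_iff'
    (fun j _ => nonneg_of_mem_doublyStochastic hB) (sum_row_of_mem_doublyStochastic hB i)
    (fun j _ => ht j)

lemma sum_negMulLog_eq_sum_sum_mul (hB : B ∈ doublyStochastic ℝ m) :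
    ∑ j, negMulLog (t j) = ∑ i, ∑ j, B i j * negMulLog (t j) := by
  rw [Finset.sum_comm]
  simp_rw [← Finset.sum_mul, sum_col_of_mem_doublyStochastic hB, one_mul]

lemma sum_negMulLog_le_sum_negMulLog_mulVec (hB : B ∈ doublyStochastic ℝ m)
    (ht : ∀ j, 0 ≤ t j) : ∑ j, negMulLog (t j) ≤ ∑ i, negMulLog ((B *ᵥ t) i) := by
  rw [sum_negMulLog_eq_sum_sum_mul hB]
  exact Finset.sum_le_sum fun i _ => sum_mul_negMulLog_le_negMulLog_mulVec hB ht i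

lemma sum_negMulLog_mulVec_eq_iff (hB : B ∈ doublyStochastic ℝ m) (ht : ∀ j, 0 ≤ t j) :
    ∑ i, negMulLog ((B *ᵥ t) i) = ∑ j, negMulLog (t j) ↔
      ∀ i j, B i j ≠ 0 → t j = (B *ᵥ t) i := by
  rw [sum_negMulLog_eq_sum_sum_mul (t := t) hB, eq_comm,
    Finset.sum_eq_sum_iff_of_le fun i _ => sum_mul_negMulLog_le_negMulLog_mulVec hB ht i]
  simp only [Finset.mem_univ, true_implies, eq_comm (a := ∑ j, _),
    negMulLog_mulVec_eq_iff hB ht]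

end DoublyStochastic

section Diagonal

variable {m : Type*} [Fintype m] [DecidableEq m]

lemma map_normSq_mem_doublyStochastic {U : Matrix m m ℂ} (hU : U ∈ unitaryGroup m ℂ) :
    U.map Complex.normSq ∈ doublyStochastic ℝ m := by
  refine mem_doublyStochastic_iff_sum.mpr
    ⟨fun i j => Complex.normSq_nonneg _, fun i => ?_, fun j => ?_⟩
  · have h := congr_fun₂ (mem_unitaryGroup_iff.mp hU) i i
    simp only [mul_apply, star_apply, one_apply_eq, Complex.star_def, Complex.mul_conj] at h
    exact_mod_cast h
  · have h := congr_fun₂ (mem_unitaryGroup_iff'.mp hU) j j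
    simp only [mul_apply, star_apply, one_apply_eq, Complex.star_def, mul_comm (starRingEnd ℂ _),
      Complex.mul_conj] at h
    exact_mod_cast h

namespace Matrix.IsHermitian

variable {A : Matrix m m ℂ} (hA : A.IsHermitian)
include hA

lemma apply_eq_sum_eigenvalues (i k : m) :
    A i k = ∑ j, (hA.eigenvalues j : ℂ) *
      (hA.eigenvectorUnitary i j * star (hA.eigenvectorUnitary k j)) := by
  conv_lhs => rw [hA.spectral_theorem]
  rw [Unitary.conjStarAlgAut_apply, mul_apply]
  refine Finset.sum_congr rfl fun j _ => ?_
  simp only [mul_diagonal, star_apply, Function.comp_apply, RCLike.ofReal_eq_complex_ofReal]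
  ring

lemma re_apply_self_eq_mulVec_eigenvalues (i : m) :
    (A i i).re =
      ((hA.eigenvectorUnitary : Matrix m m ℂ).map Complex.normSq *ᵥ hA.eigenvalues) i := by
  simp [hA.apply_eq_sum_eigenvalues i i, mulVec, dotProduct, Complex.mul_conj, mul_comm]

end Matrix.IsHermitian

lemma vnEntropy_le_sum_negMulLog_re_diag {A : Matrix m m ℂ} (hA : A.PosSemidef) :
    vnEntropy A ≤ ∑ i, negMulLog (A i i).re := by
  simp_rw [vnEntropy_of_isHermitian hA.1, hA.1.re_apply_self_eq_mulVec_eigenvalues]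
  exact sum_negMulLog_le_sum_negMulLog_mulVec
    (map_normSq_mem_doublyStochastic hA.1.eigenvectorUnitary.2) hA.eigenvalues_nonneg

lemma vnEntropy_eq_sum_negMulLog_re_diag_iff {A : Matrix m m ℂ} (hA : A.PosSemidef) :
    vnEntropy A = ∑ i, negMulLog (A i i).re ↔ A.IsDiag := by
  refine ⟨fun h i k hik => ?_, fun h => ?_⟩
  · set W : Matrix m m ℂ := (hA.1.eigenvectorUnitary : Matrix m m ℂ)
    have hB := map_normSq_mem_doublyStochastic hA.1.eigenvectorUnitary.2
    simp_rw [vnEntropy_of_isHermitian hA.1, hA.1.re_apply_self_eq_mulVec_eigenvalues] at h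
    -- Equality in Jensen forces `λⱼ = Aᵢᵢ` wherever `Wᵢⱼ ≠ 0`, so `Aᵢₖ = Aᵢᵢ (W Wᴴ)ᵢₖ = 0`.
    have heig := (sum_negMulLog_mulVec_eq_iff hB hA.eigenvalues_nonneg).mp h.symm
    have hterm : ∀ j, (hA.1.eigenvalues j : ℂ) * (W i j * star (W k j))
        = ((A i i).re : ℂ) * (W i j * star (W k j)) := by
      intro j
      by_cases hW : W i j = 0
      · simp [hW]
      · rw [hA.1.re_apply_self_eq_mulVec_eigenvalues,
          ← heig i j (by simpa only [map_apply, ne_eq, map_eq_zero] using hW)]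
    have hW : ∑ j, W i j * star (W k j) = 0 := by
      simpa only [mul_apply, star_apply, one_apply_ne hik] using
        congr_fun₂ (mem_unitaryGroup_iff.mp hA.1.eigenvectorUnitary.2) i k
    rw [hA.1.apply_eq_sum_eigenvalues, Finset.sum_congr rfl fun j _ => hterm j, ← Finset.mul_sum,
      hW, mul_zero]
  · have hd : A = diagonal fun i => ((A i i).re : ℂ) := by
      conv_lhs => rw [← h.diagonal_diag]
      exact congrArg diagonal (funext fun i => (hA.1.coe_re_apply_self i).symm)
    conv_lhs => rw [hd]
    exact vnEntropy_diagonal _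

end Diagonal

section Concavity

variable {m X : Type*} [Fintype m] [DecidableEq m] [Fintype X]

theorem sum_mul_vnEntropy_le_vnEntropy_sum_smul {ρ : X → Matrix m m ℂ}
    (hρ : ∀ x, (ρ x).PosSemidef) {p : X → ℝ} (hp : IsProbDist p) :
    ∑ x, p x * vnEntropy (ρ x) ≤ vnEntropy (∑ x, (p x : ℂ) • ρ x) := by
  have hH : (∑ x, (p x : ℂ) • ρ x).IsHermitian :=
    (posSemidef_sum _ fun x _ => (hρ x).smul (Complex.zero_le_real.mpr (hp.1 x))).1
  set W : Matrix m m ℂ := (hH.eigenvectorUnitary : Matrix m m ℂ)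
  have hW : W ∈ unitaryGroup m ℂ := hH.eigenvectorUnitary.2
  set a : X → m → ℝ := fun x k => ((Wᴴ * ρ x * W) k k).re
  have ha : ∀ x k, 0 ≤ a x k := fun x k =>
    (Complex.nonneg_iff.mp ((hρ x).conjTranspose_mul_mul_same W).diag_nonneg).1
  have heig : ∀ k, hH.eigenvalues k = ∑ x, p x * a x k := by
    have hdiag : ∑ x, p x • (Wᴴ * ρ x * W) = diagonal (Complex.ofReal ∘ hH.eigenvalues) := by
      simpa [W, star_eq_conjTranspose, Finset.mul_sum, Finset.sum_mul]
        using hH.conjStarAlgAut_star_eigenvectorUnitary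
    intro k
    simpa [a, Matrix.sum_apply] using (congr_arg Complex.re (congr_fun₂ hdiag k k)).symm
  calc ∑ x, p x * vnEntropy (ρ x) = ∑ x, p x * vnEntropy (Wᴴ * ρ x * W) := by
        simp_rw [vnEntropy_conjTranspose_mul_mul (hρ _).1 hW]
    _ ≤ ∑ x, p x * ∑ k, negMulLog (a x k) := by
        gcongr with x
        · exact hp.1 x
        · exact vnEntropy_le_sum_negMulLog_re_diag ((hρ x).conjTranspose_mul_mul_same W)
    _ = ∑ k, ∑ x, p x * negMulLog (a x k) := by
        simp_rw [Finset.mul_sum]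
        exact Finset.sum_comm
    _ ≤ ∑ k, negMulLog (∑ x, p x * a x k) := by
        gcongr with k
        simpa using concaveOn_negMulLog.le_map_sum (fun x _ => hp.1 x) hp.2
          (fun x _ => ha x k)
    _ = vnEntropy (∑ x, (p x : ℂ) • ρ x) := by
        simp_rw [← heig, vnEntropy_of_isHermitian hH]

end Concavity

section BlockRow

variable {m k X R : Type*} [NonUnitalNonAssocSemiring R] [Star R]

def blockRow (G : X → Matrix m k R) : Matrix m (X × k) R :=
  of fun i q => G q.1 i q.2

lemma blockRow_mul_conjTranspose [Fintype k] [Fintype X] (G : X → Matrix m k R) :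
    blockRow G * (blockRow G)ᴴ = ∑ x, G x * (G x)ᴴ := by
  ext i i'
  simp [blockRow, mul_apply, Fintype.sum_prod_type, Matrix.sum_apply]

lemma conjTranspose_blockRow_mul_apply [Fintype m] (G : X → Matrix m k R) (x x' : X) (j j' : k) :
    ((blockRow G)ᴴ * blockRow G) (x, j) (x', j') = ((G x)ᴴ * G x') j j' := by
  simp [blockRow, mul_apply]

lemma isDiag_conjTranspose_blockRow_mul_iff [Fintype m] {G : X → Matrix m k R}
    (hG : ∀ x, ((G x)ᴴ * G x).IsDiag) :
    ((blockRow G)ᴴ * blockRow G).IsDiag ↔ Pairwise fun x x' => (G x)ᴴ * G x' = 0 := by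
  refine ⟨fun h x x' hx => ?_, fun h => ?_⟩
  · ext j j'
    rw [← conjTranspose_blockRow_mul_apply]
    exact h (by simp [hx])
  · rintro ⟨x, j⟩ ⟨x', j'⟩ hne
    rw [conjTranspose_blockRow_mul_apply]
    obtain rfl | hx := eq_or_ne x x'
    · exact hG x (by simpa using hne)
    · rw [h hx, Matrix.zero_apply]

end BlockRow

section Gram

variable {m k X : Type*} [Fintype m] [DecidableEq m] [Fintype k] [DecidableEq k] [Fintype X]
  [DecidableEq X]

lemma vnEntropy_sum_mul_conjTranspose_le (G : X → Matrix m k ℂ) :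
    vnEntropy (∑ x, G x * (G x)ᴴ) ≤ ∑ x, ∑ j, negMulLog (((G x)ᴴ * G x) j j).re := by
  rw [← blockRow_mul_conjTranspose, vnEntropy_mul_conjTranspose_eq_conjTranspose_mul]
  simpa [Fintype.sum_prod_type, conjTranspose_blockRow_mul_apply] using
    vnEntropy_le_sum_negMulLog_re_diag (posSemidef_conjTranspose_mul_self (blockRow G))

lemma vnEntropy_sum_mul_conjTranspose_eq_iff {G : X → Matrix m k ℂ}
    (hG : ∀ x, ((G x)ᴴ * G x).IsDiag) :
    vnEntropy (∑ x, G x * (G x)ᴴ) = ∑ x, ∑ j, negMulLog (((G x)ᴴ * G x) j j).re ↔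
      Pairwise fun x x' => (G x)ᴴ * G x' = 0 := by
  rw [← blockRow_mul_conjTranspose, vnEntropy_mul_conjTranspose_eq_conjTranspose_mul,
    ← isDiag_conjTranspose_blockRow_mul_iff hG,
    ← vnEntropy_eq_sum_negMulLog_re_diag_iff (posSemidef_conjTranspose_mul_self _)]
  simp [Fintype.sum_prod_type, conjTranspose_blockRow_mul_apply]

end Gram

lemma mul_conjTranspose_mul_mul_conjTranspose_eq_zero_iff {m k l R : Type*} [Fintype m]
    [Fintype k] [Fintype l] [PartialOrder R] [NonUnitalRing R] [StarRing R] [StarOrderedRing R]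
    [NoZeroDivisors R] (F : Matrix m k R) (G : Matrix m l R) :
    F * Fᴴ * (G * Gᴴ) = 0 ↔ Fᴴ * G = 0 :=
  (self_mul_conjTranspose_mul_eq_zero F _).trans (mul_self_mul_conjTranspose_eq_zero G Fᴴ)

lemma Matrix.PosSemidef.exists_smul_eq_mul_conjTranspose {m : Type*} [Fintype m] [DecidableEq m]
    {A : Matrix m m ℂ} (hA : A.PosSemidef) {c : ℝ} (hc : 0 ≤ c) :
    ∃ G : Matrix m m ℂ, G * Gᴴ = (c : ℂ) • A ∧
      Gᴴ * G = diagonal fun j => ((c * hA.1.eigenvalues j : ℝ) : ℂ) := by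
  set W : Matrix m m ℂ := (hA.1.eigenvectorUnitary : Matrix m m ℂ)
  set D : Matrix m m ℂ := diagonal fun j => ((√(c * hA.1.eigenvalues j) : ℝ) : ℂ)
  have hD : Dᴴ * D = diagonal fun j => ((c * hA.1.eigenvalues j : ℝ) : ℂ) := by
    simp only [D, diagonal_conjTranspose, diagonal_mul_diagonal, Pi.star_apply, Complex.star_def,
      Complex.conj_ofReal, ← Complex.ofReal_mul,
      Real.mul_self_sqrt (mul_nonneg hc (hA.eigenvalues_nonneg _))]
  have hW : Wᴴ * W = 1 := mem_unitaryGroup_iff'.mp hA.1.eigenvectorUnitary.2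
  have hcD : (diagonal fun j => ((c * hA.1.eigenvalues j : ℝ) : ℂ))
      = (c : ℂ) • diagonal (RCLike.ofReal ∘ hA.1.eigenvalues) := by
    rw [← diagonal_smul]
    congr 1
    ext j
    simp
  refine ⟨W * D, ?_, ?_⟩
  · rw [conjTranspose_mul, Matrix.mul_assoc, ← Matrix.mul_assoc D,
      show D * Dᴴ = Dᴴ * D by simp [D, diagonal_conjTranspose], hD, hcD, Matrix.smul_mul,
      Matrix.mul_smul, ← Matrix.mul_assoc]
    conv_rhs => rw [hA.1.spectral_theorem]
    rfl
  · rw [conjTranspose_mul, Matrix.mul_assoc, ← Matrix.mul_assoc Wᴴ, hW, Matrix.one_mul, hD]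

lemma IsDensityMatrix.sum_eigenvalues_eq_one {m : Type*} [Fintype m] [DecidableEq m]
    {ρ : Matrix m m ℂ} (hρ : IsDensityMatrix ρ) : ∑ j, hρ.1.1.eigenvalues j = 1 := by
  simpa using congr_arg Complex.re (hρ.1.1.trace_eq_sum_eigenvalues.symm.trans hρ.2)

lemma sum_sum_negMulLog_mul_eq_shannonEntropy_add {X ι : Type*} [Fintype X] [Fintype ι]
    (p : X → ℝ) {μ : X → ι → ℝ} (hμ : ∀ x, ∑ j, μ x j = 1) :
    ∑ x, ∑ j, negMulLog (p x * μ x j)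
      = shannonEntropy p + ∑ x, p x * ∑ j, negMulLog (μ x j) := by
  simp only [negMulLog_mul, Finset.sum_add_distrib, ← Finset.sum_mul, ← Finset.mul_sum, hμ,
    one_mul, shannonEntropy]

/-- Concavity bounds for the von Neumann entropy of a convex combination of
density matrices: `∑ₓ pₓ S(ρₓ) ≤ S(∑ₓ pₓ ρₓ) ≤ H(p) + ∑ₓ pₓ S(ρₓ)`, with equality in the
second inequality iff the `ρₓ` with nonzero weights have mutually orthogonal supports
(`ρₓ ρₓ' = 0`). -/
theorem vnEntropy_convex_combination
    {X : Type*} [Fintype X] {n : ℕ}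
    (ρ : X → Matrix (Fin n) (Fin n) ℂ)
    (hρ : ∀ x, IsDensityMatrix (ρ x))
    (p : X → ℝ) (hp : IsProbDist p) :
    (∑ x, p x * vnEntropy (ρ x)) ≤ vnEntropy (∑ x, (p x : ℂ) • ρ x) ∧
    vnEntropy (∑ x, (p x : ℂ) • ρ x) ≤ shannonEntropy p + ∑ x, p x * vnEntropy (ρ x) ∧
    (vnEntropy (∑ x, (p x : ℂ) • ρ x) = shannonEntropy p + ∑ x, p x * vnEntropy (ρ x) ↔
      ∀ x x' : X, x ≠ x' → p x ≠ 0 → p x' ≠ 0 → ρ x * ρ x' = 0) := by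
  classical
  choose G hGρ hGdiag using fun x => (hρ x).1.exists_smul_eq_mul_conjTranspose (hp.1 x)
  have hsum : ∑ x, G x * (G x)ᴴ = ∑ x, (p x : ℂ) • ρ x := Finset.sum_congr rfl fun x _ => hGρ x
  have hentropy : ∑ x, ∑ j, negMulLog (((G x)ᴴ * G x) j j).re
      = shannonEntropy p + ∑ x, p x * vnEntropy (ρ x) := by
    simp only [hGdiag, diagonal_apply_eq, Complex.ofReal_re, vnEntropy_of_isHermitian (hρ _).1.1]
    exact sum_sum_negMulLog_mul_eq_shannonEntropy_add p fun x => (hρ x).sum_eigenvalues_eq_one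
  have horth : (Pairwise fun x x' => (G x)ᴴ * G x' = 0) ↔
      ∀ x x', x ≠ x' → p x ≠ 0 → p x' ≠ 0 → ρ x * ρ x' = 0 := by
    simp only [Pairwise, ← mul_conjTranspose_mul_mul_conjTranspose_eq_zero_iff, hGρ,
      smul_mul_smul_comm, smul_eq_zero, mul_eq_zero, Complex.ofReal_eq_zero]
    exact ⟨fun h x x' hx => by have := @h x x' hx; tauto,
      fun h x x' hx => by have := h x x' hx; tauto⟩
  refine ⟨sum_mul_vnEntropy_le_vnEntropy_sum_smul (fun x => (hρ x).1) hp, ?_, ?_⟩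
  · rw [← hsum, ← hentropy]
    exact vnEntropy_sum_mul_conjTranspose_le G
  · rw [← hsum, ← hentropy,
      vnEntropy_sum_mul_conjTranspose_eq_iff fun x => hGdiag x ▸ isDiag_diagonal _, horth]
end

section
/- Let H be a continuous, orthogonally affine fibred functor on finite-dimensional unital C*-algebras such that H_A(ω) ≥ 0 for every state ω on every finite-dimensional C*-algebra A, with H_A(ω) = 0 whenever ω is pure. Then there exists a constant c ≥ 0 such that for every unital *-homomorphism f : B → A between commutative finite-dimensional C*-algebras and every state ω on A, H_f(ω) = c(H(p) − H(q)), where p and q are the probability distributions corresponding to ω and ω∘f respectively and H(·) denotes Shannon entropy. -/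
open scoped ComplexOrder

open scoped ComplexOrder

/-- The state on `ℂ^X` corresponding to a probability distribution `p`. -/
noncomputable def classicalState {X : Type*} [Fintype X] (p : X → ℝ) :
    (X → ℂ) →ₗ[ℂ] ℂ where
  toFun g := ∑ x, (p x : ℂ) * g x
  map_add' a b := by simp [mul_add, Finset.sum_add_distrib]
  map_smul' c a := by
    simp only [Pi.smul_apply, smul_eq_mul, RingHom.id_apply, Finset.mul_sum]
    exact Finset.sum_congr rfl fun x _ => by ring

/-- The unique unital `*`-homomorphism `ℂ → A`, `z ↦ z • 1`. -/
noncomputable def unitalHom (A : Type*) [Semiring A] [StarMul A] [Algebra ℂ A]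
    [StarModule ℂ A] : ℂ →⋆ₐ[ℂ] A :=
  { Algebra.ofId ℂ A with
    map_star' := fun z => by
      simpa [Algebra.ofId] using algebraMap_star_comm (R := ℂ) (A := A) z }

/-- A fibred functor on finite-dimensional unital C*-algebras: an assignment of a real
number `H A B f ω` to every unital `*`-homomorphism `f : B →⋆ₐ[ℂ] A` of finite-dimensional
unital C*-algebras and every functional `ω` on `A`, which is functorial on states:
`H_id (ω) = 0` and `H_{f∘g}(ω) = H_f(ω) + H_g(ω ∘ f)`. -/
structure EntropyFunctor : Type 1 where
  H : ∀ (A : Type) [NormedRing A] [StarRing A] [CStarRing A] [NormedAlgebra ℂ A]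
        [StarModule ℂ A] [FiniteDimensional ℂ A]
      (B : Type) [NormedRing B] [StarRing B] [CStarRing B] [NormedAlgebra ℂ B]
        [StarModule ℂ B] [FiniteDimensional ℂ B],
      (B →⋆ₐ[ℂ] A) → (A →ₗ[ℂ] ℂ) → ℝ
  H_id : ∀ (A : Type) [NormedRing A] [StarRing A] [CStarRing A] [NormedAlgebra ℂ A]
        [StarModule ℂ A] [FiniteDimensional ℂ A] (ω : A →ₗ[ℂ] ℂ), IsState ω →
      H A A (StarAlgHom.id ℂ A) ω = 0
  H_comp : ∀ (A : Type) [NormedRing A] [StarRing A] [CStarRing A] [NormedAlgebra ℂ A]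
        [StarModule ℂ A] [FiniteDimensional ℂ A]
      (B : Type) [NormedRing B] [StarRing B] [CStarRing B] [NormedAlgebra ℂ B]
        [StarModule ℂ B] [FiniteDimensional ℂ B]
      (C : Type) [NormedRing C] [StarRing C] [CStarRing C] [NormedAlgebra ℂ C]
        [StarModule ℂ C] [FiniteDimensional ℂ C]
      (f : B →⋆ₐ[ℂ] A) (g : C →⋆ₐ[ℂ] B) (ω : A →ₗ[ℂ] ℂ), IsState ω →
      H A C (f.comp g) ω = H A B f ω + H B C g (ω.comp f.toAlgHom.toLinearMap)

/-- `H` is orthogonally affine: it is affine on convex combinations of mutually orthogonal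
states whose orthogonality is preserved by `f`. -/
def EntropyFunctor.OrthAffine (E : EntropyFunctor) : Prop :=
  ∀ (A : Type) [NormedRing A] [StarRing A] [CStarRing A] [NormedAlgebra ℂ A]
      [StarModule ℂ A] [FiniteDimensional ℂ A]
    (B : Type) [NormedRing B] [StarRing B] [CStarRing B] [NormedAlgebra ℂ B]
      [StarModule ℂ B] [FiniteDimensional ℂ B]
    (f : B →⋆ₐ[ℂ] A) (ω ξ : A →ₗ[ℂ] ℂ), IsState ω → IsState ξ →
    MutuallyOrthogonal ω ξ →
    MutuallyOrthogonal (ω.comp f.toAlgHom.toLinearMap) (ξ.comp f.toAlgHom.toLinearMap) →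
    ∀ l : ℝ, 0 ≤ l → l ≤ 1 →
      E.H A B f ((l : ℂ) • ω + ((1 - l : ℝ) : ℂ) • ξ)
        = l * E.H A B f ω + (1 - l) * E.H A B f ξ

/-- `H` is continuous: for each fixed `f`, `ω ↦ H_f(ω)` is continuous on the state space
(w.r.t. pointwise convergence of states). -/
def EntropyFunctor.ContinuousOnStates (E : EntropyFunctor) : Prop :=
  ∀ (A : Type) [NormedRing A] [StarRing A] [CStarRing A] [NormedAlgebra ℂ A]
      [StarModule ℂ A] [FiniteDimensional ℂ A]
    (B : Type) [NormedRing B] [StarRing B] [CStarRing B] [NormedAlgebra ℂ B]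
      [StarModule ℂ B] [FiniteDimensional ℂ B]
    (f : B →⋆ₐ[ℂ] A) (ωseq : ℕ → (A →ₗ[ℂ] ℂ)) (ω : A →ₗ[ℂ] ℂ),
    (∀ k, IsState (ωseq k)) → IsState ω →
    (∀ a, Filter.Tendsto (fun k => ωseq k a) Filter.atTop (nhds (ω a))) →
    Filter.Tendsto (fun k => E.H A B f (ωseq k)) Filter.atTop (nhds (E.H A B f ω))

/-- `H_A(ω) ≥ 0` for all states `ω`, with equality on pure states, on every
finite-dimensional unital C*-algebra `A`. -/
def EntropyFunctor.NonnegVanishingOnPure (E : EntropyFunctor) : Prop :=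
  ∀ (A : Type) [NormedRing A] [StarRing A] [CStarRing A] [NormedAlgebra ℂ A]
      [StarModule ℂ A] [FiniteDimensional ℂ A] (ω : A →ₗ[ℂ] ℂ), IsState ω →
    0 ≤ E.H A ℂ (unitalHom A) ω ∧ (IsPureState ω → E.H A ℂ (unitalHom A) ω = 0)

/-!
On `ℂ^X` every state is a probability distribution `p`, and functoriality gives
`H_f(p) = F(p) - F(q)` with `F(p) := H_{ℂ^X}(p)` (`classicalEntropy`). Orthogonal affinity of `H`
along the `*`-homomorphisms `g ↦ g ∘ φ` induced by maps of finite sets yields Faddeev's axioms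
for `F`: invariance under injective relabelling, and the grouping rule
`F(l r + (1 - l) s) = l F(r) + (1 - l) F(s) + G(l)` for disjointly supported `r`, `s`, where
`G(l) = F(l, 1 - l)` (`binaryEntropy`) is continuous and vanishes at `0` and `1`.
For uniform distributions, `Λ(n) = F(1/n, …, 1/n)` (`uniformEntropy`) is completely additive and
`(n + 1) Λ(n + 1) = n Λ(n) + (n + 1) G(n / (n + 1))`, so `Λ(n + 1) - Λ(n) → 0` by a Cesàro
argument and Erdős' theorem gives `Λ(n) = c log n`. Grouping expresses `G(a / (a + b))` through
`Λ`, so `G = c h₂` on rationals and, by continuity, on `[0, 1]`. Splitting off one atom at a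
time then gives `F = c H`.
-/

open Finset Filter Topology

section ProbDist

variable {X Y : Type*}

lemma single_apply_eq_zero_or [DecidableEq X] {s : X → ℝ} {x : X} (hsx : s x = 0) (y : X) :
    (Pi.single x 1 : X → ℝ) y = 0 ∨ s y = 0 := by
  rcases eq_or_ne y x with rfl | hy
  · exact Or.inr hsx
  · exact Or.inl (Pi.single_eq_of_ne hy 1)

variable [Fintype X]

lemma isProbDist_single [DecidableEq X] (x : X) : IsProbDist (Pi.single x (1 : ℝ)) :=
  ⟨fun y => by rw [Pi.single_apply]; split_ifs <;> norm_num, by simp⟩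

lemma isProbDist_uniform {n : ℕ} (hn : n ≠ 0) : IsProbDist fun _ : Fin n => (n : ℝ)⁻¹ :=
  ⟨fun _ => by positivity, by simp [hn]⟩

lemma IsProbDist.le_one {p : X → ℝ} (hp : IsProbDist p) (x : X) : p x ≤ 1 :=
  hp.2 ▸ single_le_sum (fun y _ => hp.1 y) (mem_univ x)

lemma IsProbDist.convexComb {r s : X → ℝ} (hr : IsProbDist r) (hs : IsProbDist s) {l : ℝ}
    (hl0 : 0 ≤ l) (hl1 : l ≤ 1) : IsProbDist (l • r + (1 - l) • s) := by
  refine ⟨fun x => ?_, by simp [sum_add_distrib, ← mul_sum, hr.2, hs.2]⟩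
  simp only [Pi.add_apply, Pi.smul_apply, smul_eq_mul]
  exact add_nonneg (mul_nonneg hl0 (hr.1 x)) (mul_nonneg (sub_nonneg.2 hl1) (hs.1 x))

lemma IsProbDist.eq_single [DecidableEq X] {p : X → ℝ} (hp : IsProbDist p) {x : X}
    (h : ∀ y ≠ x, p y = 0) : p = Pi.single x 1 := by
  have hx : p x = 1 := by rw [← hp.2, sum_eq_single x (fun y _ => h y) (by simp)]
  funext y
  rcases eq_or_ne y x with rfl | hy
  · simp [hx]
  · simp [h y hy, hy]

lemma IsProbDist.eq_single_of_apply_eq_one [DecidableEq X] {p : X → ℝ} (hp : IsProbDist p)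
    {x : X} (hx : p x = 1) : p = Pi.single x 1 := by
  have hrest : ∑ y ∈ univ.erase x, p y = 0 := by
    linarith [add_sum_erase univ p (mem_univ x), hp.2]
  exact hp.eq_single fun y hy =>
    (sum_eq_zero_iff_of_nonneg fun y _ => hp.1 y).1 hrest y (mem_erase.2 ⟨hy, mem_univ y⟩)

lemma IsProbDist.exists_eq_convexComb_single [DecidableEq X] {p : X → ℝ} (hp : IsProbDist p)
    {a : X} (ha : p a < 1) :
    ∃ s : X → ℝ, IsProbDist s ∧ s a = 0 ∧ (∀ x, p x = 0 → s x = 0) ∧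
      p = p a • Pi.single a 1 + (1 - p a) • s := by
  have hl : 0 < 1 - p a := sub_pos.2 ha
  set s : X → ℝ := (1 - p a)⁻¹ • (p - p a • Pi.single a 1)
  have hsa : s a = 0 := by simp [s]
  have hs_off : ∀ x ≠ a, s x = (1 - p a)⁻¹ * p x := fun x hx => by simp [s, hx]
  refine ⟨s, ⟨fun x => ?_, ?_⟩, hsa, fun x hx => ?_, ?_⟩
  · rcases eq_or_ne x a with rfl | hxa
    · exact hsa.ge
    · rw [hs_off x hxa]; exact mul_nonneg (inv_nonneg.2 hl.le) (hp.1 x)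
  · simp only [s, Pi.smul_apply, Pi.sub_apply, smul_eq_mul, ← mul_sum, sum_sub_distrib,
      sum_pi_single', mem_univ, if_true, hp.2]
    field_simp
  · rcases eq_or_ne x a with rfl | hxa
    · exact hsa
    · rw [hs_off x hxa, hx, mul_zero]
  · simp only [s, smul_smul, mul_inv_cancel₀ hl.ne', one_smul, add_sub_cancel]

@[elab_as_elim]
theorem IsProbDist.induction_on [DecidableEq X] {P : (X → ℝ) → Prop}
    (single : ∀ x, P (Pi.single x 1))
    (convexComb : ∀ (x : X) (s : X → ℝ) (l : ℝ), IsProbDist s → s x = 0 → 0 < l → l < 1 →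
      P s → P (l • Pi.single x 1 + (1 - l) • s))
    {p : X → ℝ} (hp : IsProbDist p) : P p := by
  suffices ∀ S : Finset X, ∀ p, IsProbDist p → (∀ x ∉ S, p x = 0) → P p from
    this univ p hp (by simp)
  intro S
  induction S using Finset.induction_on with
  | empty =>
    intro p hp hp0
    simpa [sum_eq_zero fun x _ => hp0 x (notMem_empty x)] using hp.2
  | insert a S ha IH =>
    intro p hp hpS
    have hpS' : ∀ x ∉ S, x ≠ a → p x = 0 := fun x hx hxa => hpS x (by simp [hxa, hx])
    by_cases hpa0 : p a = 0
    · refine IH p hp fun x hx => ?_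
      rcases eq_or_ne x a with rfl | hxa
      exacts [hpa0, hpS' x hx hxa]
    rcases (hp.le_one a).eq_or_lt with hpa1 | hpa1
    · rw [hp.eq_single_of_apply_eq_one hpa1]
      exact single a
    obtain ⟨s, hs, hsa, hsupp, hps⟩ := hp.exists_eq_convexComb_single hpa1
    rw [hps]
    refine convexComb a s _ hs hsa (lt_of_le_of_ne (hp.1 a) (Ne.symm hpa0)) hpa1
      (IH s hs fun x hx => ?_)
    rcases eq_or_ne x a with rfl | hxa
    exacts [hsa, hsupp x (hpS' x hx hxa)]

section Pushforward

variable [DecidableEq Y]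

def pushforward (φ : X → Y) : (X → ℝ) →ₗ[ℝ] (Y → ℝ) where
  toFun p y := ∑ x with φ x = y, p x
  map_add' p q := by ext y; simp [sum_add_distrib]
  map_smul' c p := by ext y; simp [mul_sum]

lemma pushforward_apply (φ : X → Y) (p : X → ℝ) (y : Y) :
    pushforward φ p y = ∑ x with φ x = y, p x := rfl

lemma IsProbDist.pushforward [Fintype Y] {p : X → ℝ} (hp : IsProbDist p) (φ : X → Y) :
    IsProbDist (pushforward φ p) :=
  ⟨fun y => sum_nonneg fun x _ => hp.1 x, by simp only [pushforward_apply, sum_fiberwise, hp.2]⟩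

lemma pushforward_eq_single {p : X → ℝ} (hp : IsProbDist p) {φ : X → Y} {y : Y}
    (h : ∀ x, p x ≠ 0 → φ x = y) : pushforward φ p = Pi.single y 1 := by
  funext y'
  rw [pushforward_apply, sum_filter]
  rcases eq_or_ne y' y with rfl | hy
  · rw [Pi.single_eq_same, ← hp.2]
    refine sum_congr rfl fun x _ => ?_
    by_cases hx : p x = 0 <;> simp [hx, h]
  · rw [Pi.single_eq_of_ne hy]
    refine sum_eq_zero fun x _ => ?_
    by_cases hx : p x = 0 <;> simp [hx, h, Ne.symm hy]

lemma pushforward_single [DecidableEq X] (φ : X → Y) (x : X) :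
    pushforward φ (Pi.single x 1) = Pi.single (φ x) 1 :=
  pushforward_eq_single (isProbDist_single x) fun x' hx' => by
    rcases eq_or_ne x' x with rfl | hne
    · rfl
    · simp [hne] at hx'

lemma pushforward_apply_of_injective {φ : X → Y} (hφ : φ.Injective) (p : X → ℝ) (x : X) :
    pushforward φ p (φ x) = p x := by
  rw [pushforward_apply, sum_eq_single_of_mem x (by simp) fun x' hx' hne => ?_]
  exact absurd (hφ (mem_filter.1 hx').2) hne

lemma pushforward_apply_of_notMem_range {φ : X → Y} (p : X → ℝ) {y : Y}
    (hy : y ∉ Set.range φ) : pushforward φ p y = 0 :=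
  sum_eq_zero fun x hx => absurd ⟨x, (mem_filter.1 hx).2⟩ hy

end Pushforward

lemma shannonEntropy_single [DecidableEq X] (x : X) :
    shannonEntropy (Pi.single x (1 : ℝ)) = 0 := by
  refine sum_eq_zero fun y _ => ?_
  rw [Pi.single_apply]
  split_ifs <;> simp

lemma shannonEntropy_convexComb_single [DecidableEq X] {s : X → ℝ} (hs : IsProbDist s)
    {x : X} (hsx : s x = 0) (l : ℝ) :
    shannonEntropy (l • Pi.single x 1 + (1 - l) • s)
      = (1 - l) * shannonEntropy s + Real.binEntropy l := by
  have hpt : ∀ y, Real.negMulLog ((l • Pi.single x 1 + (1 - l) • s : X → ℝ) y)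
      = (1 - l) * Real.negMulLog (s y) + s y * Real.negMulLog (1 - l)
        + (Pi.single x (Real.negMulLog l) : X → ℝ) y := by
    intro y
    rcases eq_or_ne y x with rfl | hy
    · simp [hsx]
    · simp [hy, Real.negMulLog_mul]; ring
  simp only [shannonEntropy, hpt, sum_add_distrib, ← mul_sum, ← sum_mul, hs.2,
    sum_pi_single', mem_univ, if_true, Real.binEntropy_eq_negMulLog_add_negMulLog_one_sub]
  ring

end ProbDist

section ClassicalState

variable {X Y : Type*}

lemma IsProjection.apply_eq_zero_or_one {Q : X → ℂ} (hQ : IsProjection Q) (x : X) :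
    Q x = 0 ∨ Q x = 1 := by
  have h : (Complex.normSq (Q x) : ℂ) = Q x := by
    simpa [Complex.normSq_eq_conj_mul_self] using congrFun hQ x
  obtain ⟨r, hr⟩ : ∃ r : ℝ, Q x = r := ⟨_, h.symm⟩
  rw [hr, Complex.normSq_ofReal, Complex.ofReal_inj] at h
  rcases mul_eq_zero.1 (show r * (r - 1) = 0 by linarith) with h0 | h1
  · left; simp [hr, h0]
  · right; simp [hr, sub_eq_zero.1 h1]

variable [Fintype X]

lemma classicalState_apply (p : X → ℝ) (g : X → ℂ) :
    classicalState p g = ∑ x, (p x : ℂ) * g x := rfl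

lemma classicalState_single_one [DecidableEq X] (p : X → ℝ) (x : X) :
    classicalState p (Pi.single x 1) = p x := by
  simp [classicalState_apply, Pi.single_apply]

lemma isState_classicalState {p : X → ℝ} (hp : IsProbDist p) : IsState (classicalState p) := by
  refine ⟨by simp [classicalState_apply, ← Complex.ofReal_sum, hp.2], fun a => ?_⟩
  simp only [classicalState_apply, Pi.mul_apply, Pi.star_apply, RCLike.star_def,
    ← Complex.normSq_eq_conj_mul_self, ← Complex.ofReal_mul, ← Complex.ofReal_sum]
  exact Complex.zero_le_real.2
    (sum_nonneg fun x _ => mul_nonneg (hp.1 x) (Complex.normSq_nonneg _))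

lemma IsState.exists_eq_classicalState {ω : (X → ℂ) →ₗ[ℂ] ℂ} (hω : IsState ω) :
    ∃ p : X → ℝ, IsProbDist p ∧ ω = classicalState p := by
  classical
  have hpos : ∀ x, 0 ≤ ω (Pi.single x 1) := fun x => by
    simpa [← Pi.single_mul, Pi.single_star] using hω.2 (Pi.single x 1)
  refine ⟨fun x => (ω (Pi.single x 1)).re,
    ⟨fun x => (Complex.nonneg_iff.1 (hpos x)).1, ?_⟩, ?_⟩
  · have h1 := hω.1
    rw [← univ_sum_single (1 : X → ℂ), map_sum] at h1
    simpa using congrArg Complex.re h1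
  · refine (Pi.basisFun ℂ X).ext fun x => ?_
    rw [Pi.basisFun_apply, classicalState_single_one]
    exact Complex.eq_re_of_ofReal_le (hpos x)

lemma classicalState_injective : Function.Injective (classicalState (X := X)) := by
  classical
  intro p q h
  funext x
  have := congrArg (fun ω => ω (Pi.single x 1)) h
  simp only [classicalState_single_one] at this
  exact_mod_cast this

lemma classicalState_convexComb (r s : X → ℝ) (l : ℝ) :
    (l : ℂ) • classicalState r + ((1 - l : ℝ) : ℂ) • classicalState s
      = classicalState (l • r + (1 - l) • s) := by
  refine LinearMap.ext fun g => ?_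
  simp only [LinearMap.add_apply, LinearMap.smul_apply, classicalState_apply, smul_eq_mul,
    mul_sum, ← sum_add_distrib, Pi.add_apply, Pi.smul_apply]
  refine sum_congr rfl fun x _ => ?_
  push_cast
  ring

lemma isSupportOf_classicalState (p : X → ℝ) :
    IsSupportOf (classicalState p) ((Function.support p).indicator 1) := by
  classical
  set P : X → ℂ := (Function.support p).indicator 1
  have hP : ∀ x, P x = if p x = 0 then 0 else 1 := fun x => by
    simp [P, Set.indicator_apply, Function.mem_support, ite_not]
  refine ⟨funext fun x => by by_cases hx : p x = 0 <;> simp [hP, hx],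
    fun a => ⟨sum_congr rfl fun x _ => ?_, sum_congr rfl fun x _ => ?_⟩, fun Q hQ hQω => ?_⟩
  · simp only [Pi.mul_apply, hP]; split_ifs with hx <;> simp [hx]
  · simp only [Pi.mul_apply, hP]; split_ifs with hx <;> simp [hx]
  · have hQ1 : ∀ x, p x ≠ 0 → Q x = 1 := fun x hx => by
      have := (hQω (Pi.single x 1)).1
      simp only [classicalState_apply, Pi.mul_apply, Pi.single_apply, mul_ite, mul_one,
        mul_zero, sum_ite_eq', mem_univ, if_true] at this
      exact mul_left_cancel₀ (by exact_mod_cast hx) (this.trans (mul_one _).symm)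
    refine ⟨Q - P, funext fun x => ?_⟩
    simp only [Pi.sub_apply, Pi.mul_apply, Pi.star_apply, hP]
    split_ifs with hx
    · rcases hQ.apply_eq_zero_or_one x with h | h <;> simp [h]
    · simp [hQ1 x hx]

lemma mutuallyOrthogonal_classicalState {r s : X → ℝ} (h : ∀ x, r x = 0 ∨ s x = 0) :
    MutuallyOrthogonal (classicalState r) (classicalState s) := by
  refine ⟨_, _, isSupportOf_classicalState r, isSupportOf_classicalState s, funext fun x => ?_⟩
  rcases h x with hx | hx <;> simp [hx]

lemma isPureState_classicalState_single [DecidableEq X] (x : X) :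
    IsPureState (classicalState (Pi.single x (1 : ℝ))) := by
  refine ⟨isState_classicalState (isProbDist_single x), fun l ω₁ ω₂ hl0 hl1 hω₁ hω₂ hω => ?_⟩
  obtain ⟨p₁, hp₁, rfl⟩ := hω₁.exists_eq_classicalState
  obtain ⟨p₂, hp₂, rfl⟩ := hω₂.exists_eq_classicalState
  rw [classicalState_convexComb] at hω
  have hvanish : ∀ y ≠ x, p₁ y = 0 ∧ p₂ y = 0 := fun y hy => by
    have := congrFun (classicalState_injective hω) y
    simp only [Pi.single_eq_of_ne hy, Pi.add_apply, Pi.smul_apply, smul_eq_mul] at this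
    have h1 := mul_nonneg hl0.le (hp₁.1 y)
    have h2 := mul_nonneg (sub_pos.2 hl1).le (hp₂.1 y)
    exact ⟨(mul_eq_zero.1 (by linarith : l * p₁ y = 0)).resolve_left hl0.ne',
      (mul_eq_zero.1 (by linarith : (1 - l) * p₂ y = 0)).resolve_left (sub_pos.2 hl1).ne'⟩
  rw [hp₁.eq_single fun y hy => (hvanish y hy).1, hp₂.eq_single fun y hy => (hvanish y hy).2]

def precompStarAlgHom (φ : X → Y) : (Y → ℂ) →⋆ₐ[ℂ] (X → ℂ) where
  toFun g := g ∘ φ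
  map_one' := rfl
  map_mul' _ _ := rfl
  map_zero' := rfl
  map_add' _ _ := rfl
  commutes' _ := rfl
  map_star' _ := rfl

lemma classicalState_comp_precompStarAlgHom [Fintype Y] [DecidableEq Y] (φ : X → Y)
    (p : X → ℝ) :
    (classicalState p).comp (precompStarAlgHom φ).toAlgHom.toLinearMap
      = classicalState (pushforward φ p) := by
  refine LinearMap.ext fun g => ?_
  simp only [LinearMap.comp_apply, classicalState_apply, pushforward_apply, Complex.ofReal_sum,
    sum_mul]
  rw [← sum_fiberwise univ φ]
  refine sum_congr rfl fun y _ => sum_congr rfl fun x hx => ?_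
  rw [← (mem_filter.1 hx).2]
  rfl

end ClassicalState

lemma unitalHom_comp {A B : Type*} [Semiring A] [StarMul A] [Algebra ℂ A] [StarModule ℂ A]
    [Semiring B] [StarMul B] [Algebra ℂ B] [StarModule ℂ B] (f : B →⋆ₐ[ℂ] A) :
    f.comp (unitalHom B) = unitalHom A :=
  StarAlgHom.ext fun z => AlgHom.congr_fun (Subsingleton.elim
    ((f : B →ₐ[ℂ] A).comp (unitalHom B : ℂ →ₐ[ℂ] B)) (unitalHom A : ℂ →ₐ[ℂ] A)) z

lemma tendsto_succ_sub_of_succ_mul_eq {a γ : ℕ → ℝ}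
    (h : ∀ n : ℕ, ((n : ℝ) + 1) * a (n + 1) = n * a n + (n + 1) * γ n)
    (hγ : Tendsto γ atTop (𝓝 0)) : Tendsto (fun n => a (n + 1) - a n) atTop (𝓝 0) := by
  have hsum : ∀ n : ℕ, (n : ℝ) * a n = ∑ k ∈ range n, ((k : ℝ) + 1) * γ k := by
    intro n
    induction n with
    | zero => simp
    | succ n ih => rw [sum_range_succ, ← ih]; push_cast; linarith [h n]
  have hbound : ∀ n : ℕ, 0 < n → |a n| ≤ ∑ k ∈ range n, |γ k| := by
    intro n hn
    refine le_of_mul_le_mul_left ?_ (Nat.cast_pos.2 hn : (0 : ℝ) < n)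
    calc (n : ℝ) * |a n| = |∑ k ∈ range n, ((k : ℝ) + 1) * γ k| := by
          rw [← hsum, abs_mul, Nat.abs_cast]
      _ ≤ ∑ k ∈ range n, ((k : ℝ) + 1) * |γ k| := by
          refine (abs_sum_le_sum_abs _ _).trans_eq (sum_congr rfl fun k _ => ?_)
          rw [abs_mul, abs_of_pos (by positivity)]
      _ ≤ ∑ k ∈ range n, (n : ℝ) * |γ k| := by
          gcongr with k hk
          exact_mod_cast mem_range.1 hk
      _ = n * ∑ k ∈ range n, |γ k| := (mul_sum _ _ _).symm
  have hdiv : Tendsto (fun n : ℕ => a n / (n + 1)) atTop (𝓝 0) := by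
    refine squeeze_zero_norm' (eventually_atTop.2 ⟨1, fun n hn => ?_⟩)
      (by simpa using hγ.abs.cesaro)
    have hn' : (0 : ℝ) < n := Nat.cast_pos.2 hn
    rw [Real.norm_eq_abs, abs_div, abs_of_pos (by positivity : (0 : ℝ) < n + 1), inv_mul_eq_div]
    calc |a n| / (n + 1) ≤ |a n| / n :=
          div_le_div_of_nonneg_left (abs_nonneg _) hn' (by linarith)
      _ ≤ _ := by gcongr; exact hbound n hn
  have hlim : Tendsto (fun n : ℕ => γ n - a n / (n + 1)) atTop (𝓝 0) := by
    simpa using hγ.sub hdiv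
  refine hlim.congr fun n => ?_
  field_simp
  linarith [h n]

lemma exists_abs_le_add_mul_log_two {g : ℕ → ℝ}
    (hmul : ∀ m n, 0 < m → 0 < n → g (m * n) = g m + g n) (h2 : g 2 = 0)
    (hg : Tendsto (fun n => g (n + 1) - g n) atTop (𝓝 0)) {ε : ℝ} (hε : 0 < ε) :
    ∃ M, ∀ n, 0 < n → |g n| ≤ M + ε * Nat.log 2 n := by
  obtain ⟨N, hN⟩ := Metric.tendsto_atTop.1 hg ε hε
  refine ⟨∑ j ∈ range (2 * N + 2), |g j|, fun n => ?_⟩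
  induction n using Nat.strong_induction_on with
  | _ n ih =>
  intro hn
  by_cases hsmall : n < 2 * N + 2
  · exact le_add_of_le_of_nonneg
      (single_le_sum (fun j _ => abs_nonneg (g j)) (mem_range.2 hsmall)) (by positivity)
  set q := n / 2
  have hq : 0 < q := Nat.div_pos (by omega) two_pos
  have hgq : g (2 * q) = g q := by rw [hmul 2 q two_pos hq, h2, zero_add]
  have hstep : |g n - g (2 * q)| ≤ ε := by
    rcases Nat.even_or_odd' n with ⟨k, hk | hk⟩
    · rw [show 2 * q = n by omega, sub_self, abs_zero]; exact hε.le
    · have := hN (2 * q) (by omega)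
      rw [Real.dist_eq, sub_zero, show 2 * q + 1 = n by omega] at this
      exact this.le
  have hlog : Nat.log 2 n = Nat.log 2 q + 1 := by
    have := Nat.log_pos one_lt_two (show 2 ≤ n by omega)
    rw [Nat.log_div_base]; omega
  calc |g n| ≤ |g q| + ε := by
        rw [← hgq]; linarith [abs_sub_abs_le_abs_sub (g n) (g (2 * q))]
    _ ≤ _ := by
        rw [hlog, Nat.cast_succ]
        linarith [ih q (Nat.div_lt_self hn one_lt_two) hq]

/-- Erdős' theorem on additive functions, normalized at `2`. Halving shows that `|g n|` grows
more slowly than any multiple of `log n`, whereas `g (a ^ k) = k g a` grows linearly in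
`log (a ^ k)`. -/
lemma eq_zero_of_map_mul_of_tendsto_succ_sub {g : ℕ → ℝ}
    (hmul : ∀ m n, 0 < m → 0 < n → g (m * n) = g m + g n) (h2 : g 2 = 0)
    (hg : Tendsto (fun n => g (n + 1) - g n) atTop (𝓝 0)) {a : ℕ} (ha : 0 < a) : g a = 0 := by
  by_contra hne
  have hga : 0 < |g a| := abs_pos.2 hne
  set L := Nat.log 2 a + 1
  have hL : (0 : ℝ) < L := by positivity
  obtain ⟨M, hM⟩ := exists_abs_le_add_mul_log_two hmul h2 hg (div_pos hga (mul_pos two_pos hL))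
  have hpow : ∀ k : ℕ, g (a ^ k) = k * g a := by
    intro k
    induction k with
    | zero => simpa using hmul 1 1 one_pos one_pos
    | succ k ih => rw [pow_succ, hmul _ _ (pow_pos ha k) ha, ih]; push_cast; ring
  have hlog : ∀ k : ℕ, (Nat.log 2 (a ^ k) : ℝ) ≤ L * k := fun k => by
    have : Nat.log 2 (a ^ k) ≤ L * k := calc
      Nat.log 2 (a ^ k) ≤ Nat.log 2 (2 ^ (L * k)) := Nat.log_mono_right <| by
        rw [pow_mul]; exact pow_le_pow_left' (Nat.lt_pow_succ_log_self one_lt_two a).le k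
      _ = L * k := Nat.log_pow one_lt_two _
    exact_mod_cast this
  obtain ⟨k, hk⟩ := exists_nat_gt (2 * M / |g a|)
  rw [div_lt_iff₀ hga] at hk
  have hMk := hM (a ^ k) (pow_pos ha k)
  rw [hpow, abs_mul, Nat.abs_cast] at hMk
  have : |g a| / (2 * L) * (Nat.log 2 (a ^ k)) ≤ |g a| / 2 * k :=
    calc _ ≤ |g a| / (2 * L) * (L * k) := by gcongr; exact hlog k
      _ = _ := by field_simp
  linarith

lemma eq_mul_log_of_map_mul_of_tendsto_succ_sub {f : ℕ → ℝ}
    (hmul : ∀ m n, 0 < m → 0 < n → f (m * n) = f m + f n)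
    (hf : Tendsto (fun n => f (n + 1) - f n) atTop (𝓝 0)) {n : ℕ} (hn : 0 < n) :
    f n = f 2 / Real.log 2 * Real.log n := by
  set c := f 2 / Real.log 2
  have hlog2 : Real.log 2 ≠ 0 := (Real.log_pos one_lt_two).ne'
  have hg : Tendsto (fun n : ℕ => (f (n + 1) - c * Real.log ↑(n + 1)) - (f n - c * Real.log n))
      atTop (𝓝 0) := by
    have := hf.sub (Real.tendsto_log_nat_add_one_sub_log.const_mul c)
    rw [mul_zero, sub_zero] at this
    refine this.congr fun n => ?_
    push_cast
    ring
  have key := eq_zero_of_map_mul_of_tendsto_succ_sub (g := fun n => f n - c * Real.log n)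
    (fun m n hm hn => by
      simp only [Nat.cast_mul, hmul m n hm hn]
      rw [Real.log_mul (by positivity) (by positivity)]
      ring)
    (by simp [c, hlog2]) hg hn
  linarith

lemma Real.binEntropy_div_add {a b : ℝ} (ha : 0 < a) (hb : 0 < b) :
    Real.binEntropy (a / (a + b))
      = Real.log (a + b) - a / (a + b) * Real.log a - b / (a + b) * Real.log b := by
  have hab : 0 < a + b := add_pos ha hb
  rw [Real.binEntropy_eq_negMulLog_add_negMulLog_one_sub,
    show 1 - a / (a + b) = b / (a + b) by field_simp; ring, Real.negMulLog, Real.negMulLog,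
    Real.log_div ha.ne' hab.ne', Real.log_div hb.ne' hab.ne']
  field_simp
  ring

namespace EntropyFunctor

variable (E : EntropyFunctor)

noncomputable def classicalEntropy (X : Type) [Fintype X] (p : X → ℝ) : ℝ :=
  E.H (X → ℂ) ℂ (unitalHom _) (classicalState p)

noncomputable def binaryEntropy (l : ℝ) : ℝ :=
  E.classicalEntropy Bool (l • Pi.single true 1 + (1 - l) • Pi.single false 1)

noncomputable def uniformEntropy (n : ℕ) : ℝ :=
  E.classicalEntropy (Fin n) fun _ => (n : ℝ)⁻¹

variable {E} {X Y : Type} [Fintype X] [Fintype Y]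

lemma H_eq_classicalEntropy_sub (f : (Y → ℂ) →⋆ₐ[ℂ] (X → ℂ)) {p : X → ℝ} {q : Y → ℝ}
    (hp : IsProbDist p)
    (hpq : (classicalState p).comp f.toAlgHom.toLinearMap = classicalState q) :
    E.H (X → ℂ) (Y → ℂ) f (classicalState p)
      = E.classicalEntropy X p - E.classicalEntropy Y q := by
  have := E.H_comp _ _ ℂ f (unitalHom _) _ (isState_classicalState hp)
  rw [unitalHom_comp, hpq] at this
  rw [classicalEntropy, classicalEntropy, this]
  ring

lemma classicalEntropy_single (hpos : E.NonnegVanishingOnPure) [DecidableEq X] (x : X) :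
    E.classicalEntropy X (Pi.single x 1) = 0 :=
  (hpos _ _ (isState_classicalState (isProbDist_single x))).2
    (isPureState_classicalState_single x)

lemma classicalEntropy_nonneg (hpos : E.NonnegVanishingOnPure) {p : X → ℝ}
    (hp : IsProbDist p) : 0 ≤ E.classicalEntropy X p :=
  (hpos _ _ (isState_classicalState hp)).1

lemma classicalEntropy_sub_pushforward_convexComb (haff : E.OrthAffine) [DecidableEq Y]
    (φ : X → Y) {r s : X → ℝ} (hr : IsProbDist r) (hs : IsProbDist s)
    (hrs : ∀ x, r x = 0 ∨ s x = 0)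
    (hrs' : ∀ y, pushforward φ r y = 0 ∨ pushforward φ s y = 0) {l : ℝ} (hl0 : 0 ≤ l)
    (hl1 : l ≤ 1) :
    E.classicalEntropy X (l • r + (1 - l) • s)
        - E.classicalEntropy Y (pushforward φ (l • r + (1 - l) • s))
      = l * (E.classicalEntropy X r - E.classicalEntropy Y (pushforward φ r))
        + (1 - l) * (E.classicalEntropy X s - E.classicalEntropy Y (pushforward φ s)) := by
  have h := haff _ _ (precompStarAlgHom φ) _ _ (isState_classicalState hr)
    (isState_classicalState hs) (mutuallyOrthogonal_classicalState hrs)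
    (by simpa only [classicalState_comp_precompStarAlgHom] using
      mutuallyOrthogonal_classicalState hrs') l hl0 hl1
  have hpull := classicalState_comp_precompStarAlgHom φ
  rwa [classicalState_convexComb, H_eq_classicalEntropy_sub _ (hr.convexComb hs hl0 hl1) (hpull _),
    H_eq_classicalEntropy_sub _ hr (hpull r), H_eq_classicalEntropy_sub _ hs (hpull s)] at h

lemma classicalEntropy_pushforward_of_injective (haff : E.OrthAffine)
    (hpos : E.NonnegVanishingOnPure) [DecidableEq Y] {ι : X → Y} (hι : ι.Injective)
    {p : X → ℝ} (hp : IsProbDist p) :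
    E.classicalEntropy Y (pushforward ι p) = E.classicalEntropy X p := by
  classical
  suffices E.classicalEntropy X p - E.classicalEntropy Y (pushforward ι p) = 0 by linarith
  refine hp.induction_on (fun x => ?_) fun x s l hs hsx hl0 hl1 ih => ?_
  · rw [pushforward_single, classicalEntropy_single hpos, classicalEntropy_single hpos, sub_zero]
  · have hsx' : pushforward ι s (ι x) = 0 := by rw [pushforward_apply_of_injective hι, hsx]
    have hdisj := single_apply_eq_zero_or hsx'
    rw [← pushforward_single] at hdisj
    rw [classicalEntropy_sub_pushforward_convexComb haff ι (isProbDist_single x) hs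
      (single_apply_eq_zero_or hsx) hdisj hl0.le hl1.le, ih, pushforward_single,
      classicalEntropy_single hpos, classicalEntropy_single hpos]
    ring

lemma classicalEntropy_convexComb (haff : E.OrthAffine) (hpos : E.NonnegVanishingOnPure)
    {r s : X → ℝ} (hr : IsProbDist r) (hs : IsProbDist s) (hrs : ∀ x, r x = 0 ∨ s x = 0)
    {l : ℝ} (hl0 : 0 ≤ l) (hl1 : l ≤ 1) :
    E.classicalEntropy X (l • r + (1 - l) • s)
      = l * E.classicalEntropy X r + (1 - l) * E.classicalEntropy X s + E.binaryEntropy l := by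
  set φ : X → Bool := fun x => decide (r x ≠ 0)
  have hr' : pushforward φ r = Pi.single true 1 :=
    pushforward_eq_single hr fun x hx => by simp [φ, hx]
  have hs' : pushforward φ s = Pi.single false 1 :=
    pushforward_eq_single hs fun x hx => by simp [φ, (hrs x).resolve_right hx]
  have h := classicalEntropy_sub_pushforward_convexComb haff φ hr hs hrs
    (by rw [hr', hs']; exact single_apply_eq_zero_or (by simp)) hl0 hl1
  rw [map_add, map_smul, map_smul, hr', hs', classicalEntropy_single hpos,
    classicalEntropy_single hpos] at h
  rw [binaryEntropy]
  linarith

lemma tendsto_classicalEntropy (hcont : E.ContinuousOnStates) {p : ℕ → X → ℝ} {q : X → ℝ}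
    (hp : ∀ k, IsProbDist (p k)) (hq : IsProbDist q) (h : Tendsto p atTop (𝓝 q)) :
    Tendsto (fun k => E.classicalEntropy X (p k)) atTop (𝓝 (E.classicalEntropy X q)) :=
  hcont _ _ _ _ _ (fun k => isState_classicalState (hp k)) (isState_classicalState hq) fun _ =>
    tendsto_finsetSum _ fun x _ =>
      ((Complex.continuous_ofReal.tendsto _).comp (tendsto_pi_nhds.1 h x)).mul_const _

lemma binaryEntropy_zero (hpos : E.NonnegVanishingOnPure) : E.binaryEntropy 0 = 0 := by
  simp [binaryEntropy, classicalEntropy_single hpos]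

lemma binaryEntropy_one (hpos : E.NonnegVanishingOnPure) : E.binaryEntropy 1 = 0 := by
  simp [binaryEntropy, classicalEntropy_single hpos]

lemma tendsto_binaryEntropy (hcont : E.ContinuousOnStates) {l : ℕ → ℝ} {l₀ : ℝ}
    (hl : ∀ k, l k ∈ Set.Icc 0 1) (hl₀ : l₀ ∈ Set.Icc 0 1) (h : Tendsto l atTop (𝓝 l₀)) :
    Tendsto (fun k => E.binaryEntropy (l k)) atTop (𝓝 (E.binaryEntropy l₀)) :=
  tendsto_classicalEntropy hcont
    (fun k => (isProbDist_single true).convexComb (isProbDist_single false) (hl k).1 (hl k).2)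
    ((isProbDist_single true).convexComb (isProbDist_single false) hl₀.1 hl₀.2)
    ((h.smul_const _).add ((tendsto_const_nhds.sub h).smul_const _))

lemma uniformEntropy_one (hpos : E.NonnegVanishingOnPure) : E.uniformEntropy 1 = 0 := by
  rw [uniformEntropy, (isProbDist_uniform one_ne_zero).eq_single (x := 0)
    fun y hy => absurd (Subsingleton.elim y 0) hy, classicalEntropy_single hpos]

lemma uniformEntropy_add (haff : E.OrthAffine) (hpos : E.NonnegVanishingOnPure) {m n : ℕ}
    (hm : 0 < m) (hn : 0 < n) :
    E.uniformEntropy (m + n)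
      = m / (m + n) * E.uniformEntropy m + n / (m + n) * E.uniformEntropy n
        + E.binaryEntropy (m / (m + n)) := by
  have hl : (1 : ℝ) - m / (m + n) = n / (m + n) := by field_simp; ring
  have hl0 : (0 : ℝ) ≤ m / (m + n) := by positivity
  have hl1 : (m : ℝ) / (m + n) ≤ 1 := div_le_one_of_le₀ (by simp) (by positivity)
  have hι : ∀ (i : Fin m) (j : Fin n), Fin.castAdd n i ≠ Fin.natAdd m j := fun i j h => by
    simpa [Fin.ext_iff] using (show (i : ℕ) < m + j by omega).ne (Fin.ext_iff.1 h)
  set r := pushforward (Fin.castAdd n) fun _ : Fin m => (m : ℝ)⁻¹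
  set s := pushforward (Fin.natAdd m) fun _ : Fin n => (n : ℝ)⁻¹
  have hr_left : ∀ i, r (Fin.castAdd n i) = (m : ℝ)⁻¹ :=
    pushforward_apply_of_injective (Fin.castAdd_injective m n) _
  have hr_right : ∀ j, r (Fin.natAdd m j) = 0 := fun j =>
    pushforward_apply_of_notMem_range _ fun ⟨i, hi⟩ => hι i j hi
  have hs_left : ∀ i, s (Fin.castAdd n i) = 0 := fun i =>
    pushforward_apply_of_notMem_range _ fun ⟨j, hj⟩ => hι i j hj.symm
  have hs_right : ∀ j, s (Fin.natAdd m j) = (n : ℝ)⁻¹ :=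
    pushforward_apply_of_injective (Fin.natAdd_injective n m) _
  have hsplit : (fun _ : Fin (m + n) => ((m + n : ℕ) : ℝ)⁻¹)
      = (m / (m + n) : ℝ) • r + (1 - m / (m + n) : ℝ) • s := by
    funext k
    refine Fin.addCases (fun i => ?_) (fun j => ?_) k <;>
      simp [hr_left, hr_right, hs_left, hs_right, hl] <;> field_simp
  have hrs : ∀ k, r k = 0 ∨ s k = 0 := fun k =>
    Fin.addCases (fun i => Or.inr (hs_left i)) (fun j => Or.inl (hr_right j)) k
  have hm' := isProbDist_uniform hm.ne'
  have hn' := isProbDist_uniform hn.ne'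
  rw [uniformEntropy, hsplit,
    classicalEntropy_convexComb haff hpos (hm'.pushforward _) (hn'.pushforward _) hrs hl0 hl1,
    classicalEntropy_pushforward_of_injective haff hpos (Fin.castAdd_injective m n) hm',
    classicalEntropy_pushforward_of_injective haff hpos (Fin.natAdd_injective n m) hn', hl]
  rfl

lemma succ_mul_uniformEntropy_succ (haff : E.OrthAffine) (hpos : E.NonnegVanishingOnPure)
    (n : ℕ) :
    ((n : ℝ) + 1) * E.uniformEntropy (n + 1)
      = n * E.uniformEntropy n + (n + 1) * E.binaryEntropy (n / (n + 1)) := by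
  rcases Nat.eq_zero_or_pos n with rfl | hn
  · simp [uniformEntropy_one hpos, binaryEntropy_zero hpos]
  · rw [uniformEntropy_add haff hpos hn one_pos, uniformEntropy_one hpos]
    push_cast
    field_simp
    ring

lemma uniformEntropy_mul (haff : E.OrthAffine) (hpos : E.NonnegVanishingOnPure) {k m : ℕ}
    (hk : 0 < k) (hm : 0 < m) :
    E.uniformEntropy (k * m) = E.uniformEntropy k + E.uniformEntropy m := by
  induction k, hk using Nat.le_induction with
  | base => simp [uniformEntropy_one hpos]
  | succ k hk ih =>
    have hrec := uniformEntropy_add haff hpos hk one_pos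
    rw [uniformEntropy_one hpos] at hrec
    have hfrac : ((k * m : ℕ) : ℝ) / ((k * m : ℕ) + m) = k / (k + 1) := by
      push_cast
      field_simp
    rw [add_mul, one_mul, uniformEntropy_add haff hpos (Nat.mul_pos hk hm) hm, ih, hfrac, hrec]
    push_cast
    field_simp
    ring

lemma tendsto_uniformEntropy_succ_sub (haff : E.OrthAffine) (hpos : E.NonnegVanishingOnPure)
    (hcont : E.ContinuousOnStates) :
    Tendsto (fun n => E.uniformEntropy (n + 1) - E.uniformEntropy n) atTop (𝓝 0) := by
  refine tendsto_succ_sub_of_succ_mul_eq (succ_mul_uniformEntropy_succ haff hpos) ?_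
  have hfrac : ∀ n : ℕ, (n : ℝ) / (n + 1) ∈ Set.Icc 0 1 := fun n =>
    ⟨by positivity, div_le_one_of_le₀ (by linarith) (by positivity)⟩
  simpa [binaryEntropy_one hpos] using
    tendsto_binaryEntropy hcont hfrac (by simp) (tendsto_natCast_div_add_atTop (1 : ℝ))

lemma uniformEntropy_eq_mul_log (haff : E.OrthAffine) (hpos : E.NonnegVanishingOnPure)
    (hcont : E.ContinuousOnStates) {n : ℕ} (hn : 0 < n) :
    E.uniformEntropy n = E.uniformEntropy 2 / Real.log 2 * Real.log n :=
  eq_mul_log_of_map_mul_of_tendsto_succ_sub (fun _ _ => uniformEntropy_mul haff hpos)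
    (tendsto_uniformEntropy_succ_sub haff hpos hcont) hn

lemma binaryEntropy_natCast_div (haff : E.OrthAffine) (hpos : E.NonnegVanishingOnPure)
    (hcont : E.ContinuousOnStates) {a n : ℕ} (han : a ≤ n) :
    E.binaryEntropy (a / n) = E.uniformEntropy 2 / Real.log 2 * Real.binEntropy (a / n) := by
  rcases Nat.eq_zero_or_pos a with rfl | ha
  · simp [binaryEntropy_zero hpos]
  rcases han.eq_or_lt with rfl | han
  · rw [div_self (Nat.cast_ne_zero.2 ha.ne'), binaryEntropy_one hpos, Real.binEntropy_one,
      mul_zero]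
  obtain ⟨b, rfl⟩ := Nat.exists_eq_add_of_le han.le
  have hb : 0 < b := by omega
  have h := uniformEntropy_add haff hpos ha hb
  simp only [uniformEntropy_eq_mul_log haff hpos hcont, ha, hb, Nat.add_pos_left] at h
  push_cast at h ⊢
  rw [Real.binEntropy_div_add (Nat.cast_pos.2 ha) (Nat.cast_pos.2 hb)]
  linear_combination -h

lemma binaryEntropy_eq_mul_binEntropy (haff : E.OrthAffine) (hpos : E.NonnegVanishingOnPure)
    (hcont : E.ContinuousOnStates) {x : ℝ} (hx : x ∈ Set.Icc 0 1) :
    E.binaryEntropy x = E.uniformEntropy 2 / Real.log 2 * Real.binEntropy x := by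
  have hseq : Tendsto (fun k : ℕ => (⌊x * k⌋₊ : ℝ) / k) atTop (𝓝 x) :=
    (tendsto_nat_floor_mul_div_atTop hx.1).comp tendsto_natCast_atTop_atTop
  have hle : ∀ k : ℕ, ⌊x * k⌋₊ ≤ k := fun k =>
    Nat.floor_le_of_le (mul_le_of_le_one_left (Nat.cast_nonneg k) hx.2)
  have hmem : ∀ k : ℕ, (⌊x * k⌋₊ : ℝ) / k ∈ Set.Icc 0 1 := fun k =>
    ⟨by positivity, div_le_one_of_le₀ (by exact_mod_cast hle k) (Nat.cast_nonneg k)⟩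
  refine tendsto_nhds_unique (tendsto_binaryEntropy hcont hmem hx hseq) ?_
  simp only [binaryEntropy_natCast_div haff hpos hcont (hle _)]
  exact ((Real.binEntropy_continuous.tendsto x).comp hseq).const_mul _

lemma classicalEntropy_eq_mul_shannonEntropy (haff : E.OrthAffine)
    (hpos : E.NonnegVanishingOnPure) (hcont : E.ContinuousOnStates) {p : X → ℝ}
    (hp : IsProbDist p) :
    E.classicalEntropy X p = E.uniformEntropy 2 / Real.log 2 * shannonEntropy p := by
  classical
  refine hp.induction_on (fun x => ?_) fun x s l hs hsx hl0 hl1 ih => ?_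
  · rw [classicalEntropy_single hpos, shannonEntropy_single, mul_zero]
  · rw [classicalEntropy_convexComb haff hpos (isProbDist_single x) hs
      (single_apply_eq_zero_or hsx) hl0.le hl1.le, classicalEntropy_single hpos, ih,
      binaryEntropy_eq_mul_binEntropy haff hpos hcont ⟨hl0.le, hl1.le⟩,
      shannonEntropy_convexComb_single hs hsx]
    ring

end EntropyFunctor

/-- Let `H` be a continuous, orthogonally affine fibred functor on
finite-dimensional unital C*-algebras with `H_A(ω) ≥ 0` for all states and `H_A(ω) = 0` on
pure states. Then there is a constant `c ≥ 0` such that for every unital `*`-homomorphism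
`f : ℂ^Y → ℂ^X` of commutative algebras and every state with distribution `p` whose pullback
along `f` has distribution `q`, `H_f(ω) = c (H(p) - H(q))` (Shannon entropies). -/
theorem entropyFunctor_classical_characterization (E : EntropyFunctor)
    (hcont : E.ContinuousOnStates)
    (haff : E.OrthAffine)
    (hpos : E.NonnegVanishingOnPure) :
    ∃ c : ℝ, 0 ≤ c ∧
      ∀ (X : Type) [Fintype X] (Y : Type) [Fintype Y]
        (f : (Y → ℂ) →⋆ₐ[ℂ] (X → ℂ)) (p : X → ℝ) (q : Y → ℝ),
        IsProbDist p → IsProbDist q →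
        (classicalState p).comp f.toAlgHom.toLinearMap = classicalState q →
        E.H (X → ℂ) (Y → ℂ) f (classicalState p)
          = c * (shannonEntropy p - shannonEntropy q) := by
  refine ⟨E.uniformEntropy 2 / Real.log 2,
    div_nonneg (E.classicalEntropy_nonneg hpos (isProbDist_uniform two_ne_zero))
      (Real.log_nonneg one_le_two), fun X _ Y _ f p q hp hq hpq => ?_⟩
  rw [E.H_eq_classicalEntropy_sub f hp hpq,
    E.classicalEntropy_eq_mul_shannonEntropy haff hpos hcont hp,
    E.classicalEntropy_eq_mul_shannonEntropy haff hpos hcont hq, mul_sub]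
end

section
/- Let X, Y be finite sets, and let f : ⊕_{y∈Y} M_{n_y}(ℂ) → ⊕_{x∈X} M_{m_x}(ℂ) be the unital *-homomorphism with multiplicities c_{xy} ∈ ℤ_{≥0} (so m_x = Σ_y c_{xy} n_y) given by f(⊕_y B_y) = ⊕_x ⊞_y (1_{c_{xy}} ⊗ B_y) (block-diagonal with B_y repeated c_{xy} times in the x-th summand). Let ω be the state on ⊕_x M_{m_x}(ℂ) with data (p, {ρ_x}) and let ω∘f have data (q, {σ_y}). Suppose there exist positive semidefinite matrices τ_{yx} ∈ M_{c_{xy}}(ℂ) such that tr(Σ_{x∈X} τ_{yx}) = 1 for every y with q_y ≠ 0, and p_x ρ_x = ⊞_{y∈Y} (τ_{yx} ⊗ q_y σ_y) for every x ∈ X. Then S(ω) − S(ω∘f) = Σ_{y : q_y ≠ 0} q_y S(⊞_{x∈X} τ_{yx}) ≥ 0, where ⊞_{x} τ_{yx} is viewed as a density matrix. -/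
open scoped ComplexOrder

/-- The state on `⊕ₓ M_{ι x}(ℂ)` with data `(p, ρ)`: `a ↦ ∑ₓ pₓ tr(ρₓ aₓ)`. -/
noncomputable def stateOfData {X : Type*} [Fintype X] {ι : X → Type*} [∀ x, Fintype (ι x)]
    (p : X → ℝ) (ρ : ∀ x, Matrix (ι x) (ι x) ℂ) :
    (∀ x, Matrix (ι x) (ι x) ℂ) →ₗ[ℂ] ℂ where
  toFun a := ∑ x, (p x : ℂ) * (ρ x * a x).trace
  map_add' a b := by
    simp [Matrix.mul_add, Matrix.trace_add, mul_add, Finset.sum_add_distrib]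
  map_smul' c a := by
    simp only [Pi.smul_apply, Matrix.mul_smul, Matrix.trace_smul, smul_eq_mul,
      RingHom.id_apply, Finset.mul_sum]
    exact Finset.sum_congr rfl fun x _ => by ring

/-- `(p, ρ)` is valid state data: `p` is a probability distribution and each `ρ x` is a
density matrix. -/
def IsStateData {X : Type*} [Fintype X] {ι : X → Type*} [∀ x, Fintype (ι x)]
    (p : X → ℝ) (ρ : ∀ x, Matrix (ι x) (ι x) ℂ) : Prop :=
  IsProbDist p ∧ ∀ x, IsDensityMatrix (ρ x)

/-- Segal entropy of the state with data `(p, ρ)`: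
`S(ω) = -∑ₓ pₓ log pₓ - ∑ₓ pₓ tr(ρₓ log ρₓ)`. -/
noncomputable def segalEntropy {X : Type*} [Fintype X] {ι : X → Type*} [∀ x, Fintype (ι x)]
    [∀ x, DecidableEq (ι x)] (p : X → ℝ) (ρ : ∀ x, Matrix (ι x) (ι x) ℂ) : ℝ :=
  shannonEntropy p + ∑ x, p x * vnEntropy (ρ x)

open Kronecker

/-!
The von Neumann entropy only sees the spectrum, so it is additive over block sums and satisfies
`S(r • A) = r S(A) + tr A · η(r)` and `S(A ⊗ B) = tr B · S(A) + tr A · S(B)`, where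
`η = negMulLog`. Writing `S(ω) = ∑ₓ S(pₓ ρₓ)` and expanding `pₓ ρₓ = ⊞_y τ_yx ⊗ q_y σ_y`,
the terms `tr τ_yx · S(q_y σ_y)` sum over `x` to `S(q_y σ_y)`, which reassemble `S(ω ∘ f)`;
what remains is `∑_y q_y S(⊞ₓ τ_yx)`, a weighted sum of entropies of density matrices.
-/

namespace Matrix

open Polynomial Real

variable {ι : Type*} [Fintype ι] [DecidableEq ι]

lemma IsHermitian.vnEntropy_eq {A : Matrix ι ι ℂ} (hA : A.IsHermitian) :
    vnEntropy A = ∑ i, negMulLog (hA.eigenvalues i) :=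
  dif_pos hA

lemma IsHermitian.eq_unitary_conj_diagonal {A : Matrix ι ι ℂ} (hA : A.IsHermitian) :
    A = (hA.eigenvectorUnitary : Matrix ι ι ℂ) * diagonal (fun i => (hA.eigenvalues i : ℂ))
      * star (hA.eigenvectorUnitary : Matrix ι ι ℂ) :=
  hA.spectral_theorem

lemma IsHermitian.re_trace_eq_sum_eigenvalues {A : Matrix ι ι ℂ} (hA : A.IsHermitian) :
    A.trace.re = ∑ i, hA.eigenvalues i := by
  simp [hA.trace_eq_sum_eigenvalues]

lemma vnEntropy_unitary_conj_diagonal (U : unitary (Matrix ι ι ℂ)) (d : ι → ℝ) :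
    vnEntropy ((U : Matrix ι ι ℂ) * diagonal (fun i => (d i : ℂ)) * star (U : Matrix ι ι ℂ))
      = ∑ i, negMulLog (d i) := by
  set D := diagonal (fun i => (d i : ℂ))
  have hA : ((U : Matrix ι ι ℂ) * D * star (U : Matrix ι ι ℂ)).IsHermitian := by
    rw [star_eq_conjTranspose]
    exact isHermitian_mul_mul_conjTranspose _ (isHermitian_diagonal_of_self_adjoint _
      (funext fun i => Complex.conj_ofReal (d i)))
  have hcharpoly : ((U : Matrix ι ι ℂ) * D * star (U : Matrix ι ι ℂ)).charpoly
      = ∏ i, (X - C (d i : ℂ)) := by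
    rw [charpoly_mul_comm, ← Matrix.mul_assoc, Unitary.coe_star_mul_self, Matrix.one_mul,
      charpoly_diagonal]
  have hspec : Multiset.map (fun i => (hA.eigenvalues i : ℂ)) Finset.univ.val
      = Multiset.map (fun i => (d i : ℂ)) Finset.univ.val := by
    have hroots := hA.roots_charpoly_eq_eigenvalues
    rw [hcharpoly, roots_prod _ _ (by simp [Finset.prod_ne_zero_iff, X_sub_C_ne_zero])] at hroots
    simpa using hroots.symm
  rw [hA.vnEntropy_eq, Finset.sum_eq_multiset_sum, Finset.sum_eq_multiset_sum]
  simpa [Multiset.map_map, Function.comp_def] using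
    congrArg (fun s => (s.map fun z : ℂ => negMulLog z.re).sum) hspec

lemma IsHermitian.vnEntropy_real_smul {A : Matrix ι ι ℂ} (hA : A.IsHermitian) (r : ℝ) :
    vnEntropy ((r : ℂ) • A) = r * vnEntropy A + negMulLog r * A.trace.re := by
  have hdiag : diagonal (fun i => ((r * hA.eigenvalues i : ℝ) : ℂ))
      = (r : ℂ) • diagonal (fun i => (hA.eigenvalues i : ℂ)) := by
    rw [← diagonal_smul]
    simp [Pi.smul_def]
  have hrA : (r : ℂ) • A = (hA.eigenvectorUnitary : Matrix ι ι ℂ)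
      * diagonal (fun i => ((r * hA.eigenvalues i : ℝ) : ℂ))
      * star (hA.eigenvectorUnitary : Matrix ι ι ℂ) := by
    rw [hdiag, Matrix.mul_smul, Matrix.smul_mul, ← hA.eq_unitary_conj_diagonal]
  rw [hrA, vnEntropy_unitary_conj_diagonal, hA.vnEntropy_eq, hA.re_trace_eq_sum_eigenvalues]
  simp only [negMulLog_mul, Finset.sum_add_distrib, Finset.mul_sum]
  rw [add_comm]
  simp only [mul_comm]

section Kronecker

lemma IsHermitian.kronecker {ι κ α : Type*} [CommSemiring α] [StarRing α]
    {A : Matrix ι ι α} {B : Matrix κ κ α} (hA : A.IsHermitian) (hB : B.IsHermitian) :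
    (A ⊗ₖ B).IsHermitian := by
  rw [IsHermitian, conjTranspose_kronecker, hA.eq, hB.eq]

variable {κ : Type*} [Fintype κ] [DecidableEq κ]

lemma IsHermitian.vnEntropy_kronecker {A : Matrix ι ι ℂ} {B : Matrix κ κ ℂ}
    (hA : A.IsHermitian) (hB : B.IsHermitian) :
    vnEntropy (A ⊗ₖ B) = B.trace.re * vnEntropy A + A.trace.re * vnEntropy B := by
  set U := hA.eigenvectorUnitary
  set V := hB.eigenvectorUnitary
  let W : unitary (Matrix (ι × κ) (ι × κ) ℂ) :=
    ⟨(U : Matrix ι ι ℂ) ⊗ₖ (V : Matrix κ κ ℂ), kronecker_mem_unitary U.2 V.2⟩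
  have hAB : A ⊗ₖ B = (W : Matrix (ι × κ) (ι × κ) ℂ)
      * diagonal (fun ij => ((hA.eigenvalues ij.1 * hB.eigenvalues ij.2 : ℝ) : ℂ))
      * star (W : Matrix (ι × κ) (ι × κ) ℂ) := by
    have hdiag :
        diagonal (fun ij : ι × κ => ((hA.eigenvalues ij.1 * hB.eigenvalues ij.2 : ℝ) : ℂ))
          = diagonal (fun i => (hA.eigenvalues i : ℂ))
            ⊗ₖ diagonal (fun j => (hB.eigenvalues j : ℂ)) := by
      rw [diagonal_kronecker_diagonal]
      simp
    rw [hdiag, star_eq_conjTranspose, conjTranspose_kronecker, ← mul_kronecker_mul,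
      ← mul_kronecker_mul, ← star_eq_conjTranspose, ← star_eq_conjTranspose,
      ← hA.eq_unitary_conj_diagonal, ← hB.eq_unitary_conj_diagonal]
  rw [hAB, vnEntropy_unitary_conj_diagonal, hA.vnEntropy_eq, hB.vnEntropy_eq,
    hA.re_trace_eq_sum_eigenvalues, hB.re_trace_eq_sum_eigenvalues, Fintype.sum_prod_type]
  simp only [negMulLog_mul, Finset.sum_add_distrib, Finset.mul_sum, Finset.sum_mul]
  congr 1
  exact Finset.sum_comm

end Kronecker

section BlockDiagonal

variable {o : Type*} {κ : o → Type*} [Fintype o] [DecidableEq o]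
  [∀ i, Fintype (κ i)] [∀ i, DecidableEq (κ i)]

lemma blockDiagonal'_mem_unitary {α : Type*} [Semiring α] [StarRing α]
    {U : ∀ i, Matrix (κ i) (κ i) α} (hU : ∀ i, U i ∈ unitary (Matrix (κ i) (κ i) α)) :
    blockDiagonal' U ∈ unitary (Matrix (Σ i, κ i) (Σ i, κ i) α) := by
  have hstar : star (blockDiagonal' U) = blockDiagonal' fun i => star (U i) := by
    simp only [star_eq_conjTranspose, blockDiagonal'_conjTranspose]
  rw [Unitary.mem_iff, hstar, ← blockDiagonal'_mul, ← blockDiagonal'_mul]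
  simp only [Unitary.star_mul_self_of_mem (hU _), Unitary.mul_star_self_of_mem (hU _)]
  exact ⟨blockDiagonal'_one, blockDiagonal'_one⟩

lemma vnEntropy_blockDiagonal' {A : ∀ i, Matrix (κ i) (κ i) ℂ} (hA : ∀ i, (A i).IsHermitian) :
    vnEntropy (blockDiagonal' A) = ∑ i, vnEntropy (A i) := by
  let W : unitary (Matrix (Σ i, κ i) (Σ i, κ i) ℂ) :=
    ⟨blockDiagonal' fun i => ((hA i).eigenvectorUnitary : Matrix (κ i) (κ i) ℂ),
      blockDiagonal'_mem_unitary fun i => (hA i).eigenvectorUnitary.2⟩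
  have hW : blockDiagonal' A = (W : Matrix (Σ i, κ i) (Σ i, κ i) ℂ)
      * diagonal (fun ik => ((hA ik.1).eigenvalues ik.2 : ℂ))
      * star (W : Matrix (Σ i, κ i) (Σ i, κ i) ℂ) := by
    rw [← blockDiagonal'_diagonal (fun i k => ((hA i).eigenvalues k : ℂ)), star_eq_conjTranspose,
      blockDiagonal'_conjTranspose, ← blockDiagonal'_mul, ← blockDiagonal'_mul]
    exact congrArg _ (funext fun i => (hA i).eq_unitary_conj_diagonal)
  rw [hW, vnEntropy_unitary_conj_diagonal, Fintype.sum_sigma]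
  exact Finset.sum_congr rfl fun i _ => ((hA i).vnEntropy_eq).symm

end BlockDiagonal

lemma PosSemidef.vnEntropy_nonneg {A : Matrix ι ι ℂ} (hA : A.PosSemidef) (htr : A.trace ≤ 1) :
    0 ≤ vnEntropy A := by
  rw [hA.isHermitian.vnEntropy_eq]
  refine Finset.sum_nonneg fun i _ => negMulLog_nonneg (hA.eigenvalues_nonneg i) ?_
  calc hA.isHermitian.eigenvalues i ≤ ∑ j, hA.isHermitian.eigenvalues j :=
        Finset.single_le_sum (fun j _ => hA.eigenvalues_nonneg j) (Finset.mem_univ i)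
    _ = A.trace.re := hA.isHermitian.re_trace_eq_sum_eigenvalues.symm
    _ ≤ 1 := by simpa using (Complex.le_def.mp htr).1

lemma vnEntropy_blockDiagonal'_nonneg {o : Type*} {κ : o → Type*} [Fintype o] [DecidableEq o]
    [∀ i, Fintype (κ i)] [∀ i, DecidableEq (κ i)] {A : ∀ i, Matrix (κ i) (κ i) ℂ}
    (hA : ∀ i, (A i).PosSemidef) (htr : ∑ i, (A i).trace ≤ 1) :
    0 ≤ vnEntropy (blockDiagonal' A) := by
  rw [vnEntropy_blockDiagonal' fun i => (hA i).isHermitian]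
  refine Finset.sum_nonneg fun i _ => (hA i).vnEntropy_nonneg (le_trans ?_ htr)
  exact Finset.single_le_sum (fun j _ => (hA j).trace_nonneg) (Finset.mem_univ i)

end Matrix

open Matrix Real

lemma IsDensityMatrix.vnEntropy_real_smul {ι : Type*} [Fintype ι] [DecidableEq ι]
    {ρ : Matrix ι ι ℂ} (hρ : IsDensityMatrix ρ) (r : ℝ) :
    vnEntropy ((r : ℂ) • ρ) = r * vnEntropy ρ + negMulLog r := by
  rw [hρ.1.isHermitian.vnEntropy_real_smul, hρ.2, Complex.one_re, mul_one]

lemma segalEntropy_eq_sum_vnEntropy_smul {X : Type*} [Fintype X] {ι : X → Type*}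
    [∀ x, Fintype (ι x)] [∀ x, DecidableEq (ι x)] (p : X → ℝ) {ρ : ∀ x, Matrix (ι x) (ι x) ℂ}
    (hρ : ∀ x, IsDensityMatrix (ρ x)) :
    segalEntropy p ρ = ∑ x, vnEntropy ((p x : ℂ) • ρ x) := by
  simp only [(hρ _).vnEntropy_real_smul, Finset.sum_add_distrib, segalEntropy, shannonEntropy]
  ring

theorem segalEntropy_eq_add_of_disintegration {X Y : Type*} [Fintype X] [Fintype Y]
    [DecidableEq X] [DecidableEq Y] {κ : X → Y → Type*} {ν : Y → Type*}
    [∀ x y, Fintype (κ x y)] [∀ x y, DecidableEq (κ x y)] [∀ y, Fintype (ν y)]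
    [∀ y, DecidableEq (ν y)]
    (p : X → ℝ) {ρ : ∀ x, Matrix ((y : Y) × (κ x y × ν y)) ((y : Y) × (κ x y × ν y)) ℂ}
    (q : Y → ℝ) {σ : ∀ y, Matrix (ν y) (ν y) ℂ} {τ : ∀ y x, Matrix (κ x y) (κ x y) ℂ}
    (hρ : ∀ x, IsDensityMatrix (ρ x)) (hσ : ∀ y, IsDensityMatrix (σ y))
    (hτ : ∀ y x, (τ y x).IsHermitian) (hτtr : ∀ y, q y ≠ 0 → ∑ x, (τ y x).trace = 1)
    (hdis : ∀ x, (p x : ℂ) • ρ x = blockDiagonal' fun y => τ y x ⊗ₖ ((q y : ℂ) • σ y)) :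
    segalEntropy p ρ
      = segalEntropy q σ + ∑ y, q y * vnEntropy (blockDiagonal' fun x => τ y x) := by
  have hqσ : ∀ y, ((q y : ℂ) • σ y).IsHermitian := fun y =>
    (hσ y).1.isHermitian.smul (Complex.conj_ofReal (q y))
  have hblock : ∀ y x, vnEntropy (τ y x ⊗ₖ ((q y : ℂ) • σ y))
      = q y * vnEntropy (τ y x) + (τ y x).trace.re * vnEntropy ((q y : ℂ) • σ y) := by
    intro y x
    rw [(hτ y x).vnEntropy_kronecker (hqσ y), trace_smul, (hσ y).2]
    simp
  have hweight : ∀ y, (∑ x, (τ y x).trace.re) * vnEntropy ((q y : ℂ) • σ y)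
      = vnEntropy ((q y : ℂ) • σ y) := by
    intro y
    by_cases hq : q y = 0
    · rw [(hσ y).vnEntropy_real_smul, hq]
      simp
    · rw [← Complex.re_sum, hτtr y hq, Complex.one_re, one_mul]
  calc segalEntropy p ρ
      = ∑ x, ∑ y, (q y * vnEntropy (τ y x) + (τ y x).trace.re * vnEntropy ((q y : ℂ) • σ y)) := by
        rw [segalEntropy_eq_sum_vnEntropy_smul p hρ]
        simp only [hdis, vnEntropy_blockDiagonal' fun y => (hτ y _).kronecker (hqσ y), hblock]
    _ = ∑ y, (q y * vnEntropy (blockDiagonal' fun x => τ y x)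
          + (∑ x, (τ y x).trace.re) * vnEntropy ((q y : ℂ) • σ y)) := by
        rw [Finset.sum_comm]
        simp only [Finset.sum_add_distrib, ← Finset.mul_sum, ← Finset.sum_mul,
          vnEntropy_blockDiagonal' (hτ _)]
    _ = segalEntropy q σ + ∑ y, q y * vnEntropy (blockDiagonal' fun x => τ y x) := by
        rw [segalEntropy_eq_sum_vnEntropy_smul q hσ, ← Finset.sum_add_distrib]
        simp only [hweight, add_comm]

theorem disintegration_entropy_change_nonneg_general
    {X Y : Type*} [Fintype X] [Fintype Y] [DecidableEq X] [DecidableEq Y]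
    (n : Y → ℕ) (c : X → Y → ℕ)
    (p : X → ℝ)
    (ρ : ∀ x, Matrix ((y : Y) × (Fin (c x y) × Fin (n y)))
                     ((y : Y) × (Fin (c x y) × Fin (n y))) ℂ)
    (hpρ : IsStateData p ρ)
    (q : Y → ℝ) (σ : ∀ y, Matrix (Fin (n y)) (Fin (n y)) ℂ)
    (hqσ : IsStateData q σ)
    (τ : ∀ y x, Matrix (Fin (c x y)) (Fin (c x y)) ℂ)
    (hτ : ∀ y x, (τ y x).PosSemidef)
    (hτtr : ∀ y, q y ≠ 0 → ∑ x, (τ y x).trace = 1)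
    (hdis : ∀ x, (p x : ℂ) • ρ x
      = Matrix.blockDiagonal' (fun y => τ y x ⊗ₖ ((q y : ℂ) • σ y))) :
    segalEntropy p ρ - segalEntropy q σ
      = ∑ y ∈ Finset.univ.filter (fun y => q y ≠ 0),
          q y * vnEntropy (Matrix.blockDiagonal' (fun x => τ y x)) ∧
    0 ≤ segalEntropy p ρ - segalEntropy q σ := by
  obtain ⟨⟨hq_nonneg, -⟩, hσ⟩ := hqσ
  have hchange := segalEntropy_eq_add_of_disintegration p q hpρ.2 hσ
    (fun y x => (hτ y x).isHermitian) hτtr hdis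
  rw [hchange, add_sub_cancel_left]
  refine ⟨?_, Finset.sum_nonneg fun y _ => ?_⟩
  · rw [Finset.sum_filter_of_ne]
    intro y _ hy hq
    exact hy (by rw [hq, zero_mul])
  by_cases hq : q y = 0
  · rw [hq, zero_mul]
  · exact mul_nonneg (hq_nonneg y) (vnEntropy_blockDiagonal'_nonneg (hτ y) (hτtr y hq).le)

/-- Suppose `f : ⊕_y M_{n y} → ⊕_x M_{m x}` (with multiplicities `c x y`,
so that the `x`-th summand is indexed by `Σ y, Fin (c x y) × Fin (n y)`) is given by
`f(⊕_y B_y) = ⊕_x ⊞_y (1_{c x y} ⊗ B_y)`, `ω` has data `(p, ρ)` and `ω ∘ f` has data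
`(q, σ)`. If a disintegration exists, i.e. there are positive semidefinite
`τ y x ∈ M_{c x y}(ℂ)` with `tr(∑ₓ τ y x) = 1` whenever `q y ≠ 0` and
`pₓ ρₓ = ⊞_y (τ y x ⊗ q_y σ_y)`, then
`S(ω) - S(ω ∘ f) = ∑_{y : q y ≠ 0} q_y S(⊞ₓ τ y x) ≥ 0`. -/
theorem disintegration_entropy_change_nonneg
    {X Y : Type*} [Fintype X] [Fintype Y] [DecidableEq X] [DecidableEq Y]
    (n : Y → ℕ) (c : X → Y → ℕ)
    (p : X → ℝ)
    (ρ : ∀ x, Matrix ((y : Y) × (Fin (c x y) × Fin (n y)))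
                     ((y : Y) × (Fin (c x y) × Fin (n y))) ℂ)
    (hpρ : IsStateData p ρ)
    (q : Y → ℝ) (σ : ∀ y, Matrix (Fin (n y)) (Fin (n y)) ℂ)
    (hqσ : IsStateData q σ)
    (hpull : ∀ B : ∀ y, Matrix (Fin (n y)) (Fin (n y)) ℂ,
      stateOfData p ρ (fun x => Matrix.blockDiagonal'
        (fun y => (1 : Matrix (Fin (c x y)) (Fin (c x y)) ℂ) ⊗ₖ B y))
        = stateOfData q σ B)
    (τ : ∀ y x, Matrix (Fin (c x y)) (Fin (c x y)) ℂ)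
    (hτ : ∀ y x, (τ y x).PosSemidef)
    (hτtr : ∀ y, q y ≠ 0 → ∑ x, (τ y x).trace = 1)
    (hdis : ∀ x, (p x : ℂ) • ρ x
      = Matrix.blockDiagonal' (fun y => τ y x ⊗ₖ ((q y : ℂ) • σ y))) :
    segalEntropy p ρ - segalEntropy q σ
      = ∑ y ∈ Finset.univ.filter (fun y => q y ≠ 0),
          q y * vnEntropy (Matrix.blockDiagonal' (fun x => τ y x)) ∧
    0 ≤ segalEntropy p ρ - segalEntropy q σ :=
  disintegration_entropy_change_nonneg_general n c p ρ hpρ q σ hqσ τ hτ hτtr hdis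
end
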